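/- arXiv:1608.00952 — 5 statements merged into one kernel-verified Lean document; each statement's English description precedes it below -/
import Mathlib

section
/- For an n×n (0,1)-matrix A in which every row has exactly r ones (with 1 ≤ r ≤ n), the permanent of A satisfies per(A) ≤ (r!)^{n/r}. -/
/-!
Schrijver's proof of Bregman's bound `|M| ≤ ∏ⱼ (dⱼ!)^(1/dⱼ)` for the set `M` of perfect matchings
(permutations `σ` with `R i (σ i)` for all `i`) of a relation `R` on `Fin N` with row degrees `dⱼ`,
by induction on `N`; the permanent of a (0,1)-matrix counts the perfect matchings of its support.

Fix a row `i` and let `t k` count the matchings with `σ i = k`. Jensen's inequality for `x log x`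
over the `dᵢ` admissible columns gives `|M|^|M| ≤ ∏_{σ ∈ M} dᵢ · t (σ i)`. Each `t k` is at most the
number of matchings of the minor without row `i` and column `k`, in which row `j` has degree
`dⱼ - 1` if `R j k` and `dⱼ` otherwise, so induction bounds it. Multiplying over all rows and
regrouping by `j`: for fixed `σ ∈ M`, row `j` loses a column in exactly `dⱼ - 1` of the minors
(those with `k = σ i`, `i ≠ j`, `R j (σ i)`), and `d · (d-1)! · (d!)^((N-d)/d) = (d!)^(N/d)`
collapses the product to `(∏ⱼ (dⱼ!)^(1/dⱼ))^(N·|M|)`.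
-/

open Finset Real Equiv

theorem pow_sum_div_card_le_prod_pow {ι : Type*} {s : Finset ι} (hs : s.Nonempty) (c : ι → ℕ) :
    ((∑ k ∈ s, (c k : ℝ)) / #s) ^ (∑ k ∈ s, c k) ≤ ∏ k ∈ s, (c k : ℝ) ^ c k := by
  set T := ∑ k ∈ s, c k
  have hcard : (0 : ℝ) < #s := by exact_mod_cast hs.card_pos
  have hT : (T : ℝ) = ∑ k ∈ s, (c k : ℝ) := by push_cast [T]; rfl
  rcases T.eq_zero_or_pos with hT0 | hTpos
  · rw [hT0, pow_zero]
    refine (prod_eq_one fun k hk => ?_).ge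
    rw [sum_eq_zero_iff.mp hT0 k hk, pow_zero]
  have hpow_pos : ∀ k, (0 : ℝ) < (c k : ℝ) ^ c k := fun k => by
    rcases (c k).eq_zero_or_pos with h | h
    · simp [h]
    · positivity
  rw [← hT, ← log_le_log_iff (by positivity) (prod_pos fun k _ => hpow_pos k),
    log_pow, log_prod fun k _ => (hpow_pos k).ne']
  simp only [log_pow]
  have jensen := convexOn_mul_log.map_sum_le (t := s) (w := fun _ => (#s : ℝ)⁻¹)
    (p := fun k => (c k : ℝ)) (fun _ _ => by positivity)
    (by rw [sum_const, nsmul_eq_mul, mul_inv_cancel₀ hcard.ne'])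
    fun _ _ => Set.mem_Ici.mpr (Nat.cast_nonneg _)
  simp only [smul_eq_mul, ← mul_sum, ← hT] at jensen
  calc (T : ℝ) * log (T / #s) = #s * ((#s : ℝ)⁻¹ * T * log ((#s : ℝ)⁻¹ * T)) := by
        field_simp
    _ ≤ #s * ((#s : ℝ)⁻¹ * ∑ k ∈ s, c k * log (c k)) := by gcongr
    _ = ∑ k ∈ s, c k * log (c k) := by field_simp

theorem pow_card_le_prod_card_mul_card_fiber {α β : Type*} [DecidableEq β] {s : Finset α}
    {t : Finset β} {g : α → β} (hg : ∀ x ∈ s, g x ∈ t) :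
    (#s : ℝ) ^ #s ≤ ∏ x ∈ s, ((#t : ℝ) * #{y ∈ s | g y = g x}) := by
  rcases t.eq_empty_or_nonempty with rfl | ht
  · rw [s.eq_empty_of_forall_notMem fun x hx => notMem_empty _ (hg x hx)]
    simp
  have hfibers : ∑ b ∈ t, #{y ∈ s | g y = b} = #s := (card_eq_sum_card_fiberwise hg).symm
  have jensen := pow_sum_div_card_le_prod_pow ht fun b => #{y ∈ s | g y = b}
  rw [← Nat.cast_sum, hfibers, div_pow] at jensen
  have hcard : (0 : ℝ) < #t := by exact_mod_cast ht.card_pos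
  calc (#s : ℝ) ^ #s = #t ^ #s * ((#s : ℝ) ^ #s / #t ^ #s) := by field_simp
    _ ≤ #t ^ #s * ∏ b ∈ t, (#{y ∈ s | g y = b} : ℝ) ^ #{y ∈ s | g y = b} := by gcongr
    _ = ∏ x ∈ s, ((#t : ℝ) * #{y ∈ s | g y = g x}) := by
      rw [prod_mul_distrib, prod_const,
        ← prod_fiberwise_of_maps_to' hg fun b => (#{y ∈ s | g y = b} : ℝ)]
      simp only [prod_const]

namespace Bregman

noncomputable def factor (d : ℕ) : ℝ := (d.factorial : ℝ) ^ (d : ℝ)⁻¹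

lemma factor_pos (d : ℕ) : 0 < factor d := by
  unfold factor; positivity

lemma factor_pow_self (d : ℕ) : factor d ^ d = d.factorial := by
  rcases d.eq_zero_or_pos with rfl | hd
  · simp
  rw [factor, ← rpow_natCast, ← rpow_mul (by positivity),
    inv_mul_cancel₀ (by positivity), rpow_one]

lemma factor_pow_eq_rpow (d n : ℕ) : factor d ^ n = (d.factorial : ℝ) ^ ((n : ℝ) / d) := by
  rw [factor, ← rpow_natCast, ← rpow_mul (by positivity), inv_mul_eq_div]

lemma mul_factor_pred_pow_mul_factor_pow {d N : ℕ} (hd : 1 ≤ d) (hdN : d ≤ N) :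
    d * factor (d - 1) ^ (d - 1) * factor d ^ (N - d) = factor d ^ N := by
  obtain ⟨e, rfl⟩ := Nat.exists_eq_add_of_le' hd
  rw [Nat.add_sub_cancel, factor_pow_self, ← pow_sub_mul_pow _ hdN, factor_pow_self,
    Nat.factorial_succ]
  push_cast
  ring

section Matchings

variable {ι : Type*} [Fintype ι] [DecidableEq ι] (R : ι → ι → Prop) [DecidableRel R]

def matchings : Finset (Perm ι) := {σ | ∀ i, R i (σ i)}

def degree (i : ι) : ℕ := #{j | R i j}

variable {R}

@[simp]
lemma mem_matchings {σ : Perm ι} : σ ∈ matchings R ↔ ∀ i, R i (σ i) := by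
  simp [matchings]

lemma permanent_eq_card_matchings {A : Matrix ι ι ℕ}
    (hA : ∀ i j, A i j = if R i j then 1 else 0) :
    A.permanent = #(matchings R) := by
  rw [← Matrix.permanent_transpose, Matrix.permanent, matchings, card_filter]
  refine sum_congr rfl fun σ _ => ?_
  simp only [Matrix.transpose_apply, hA]
  exact Fintype.prod_boole

variable (R) in
lemma pow_card_matchings_le :
    (#(matchings R) : ℝ) ^ (#(matchings R) * Fintype.card ι) ≤
      ∏ σ ∈ matchings R, ∏ i, ((degree R i : ℝ) * #{τ ∈ matchings R | τ i = σ i}) := by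
  rw [prod_comm, pow_mul, ← card_univ, ← prod_const]
  refine prod_le_prod (fun _ _ => by positivity) fun i _ => ?_
  exact pow_card_le_prod_card_mul_card_fiber fun σ hσ => by simpa using mem_matchings.mp hσ i

lemma degree_mul_prod_factor_eq {σ : Perm ι} {j : ι} (hj : R j (σ j)) :
    degree R j * ∏ i ∈ {j}ᶜ, factor (if R j (σ i) then degree R j - 1 else degree R j) =
      factor (degree R j) ^ Fintype.card ι := by
  have hdeg_pos : 1 ≤ degree R j := card_pos.mpr ⟨σ j, by simpa using hj⟩
  have hdeg_le : degree R j ≤ Fintype.card ι := card_filter_le _ _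
  have hmatched : #{i ∈ {j}ᶜ | R j (σ i)} = degree R j - 1 := by
    rw [compl_singleton, filter_erase, card_erase_of_mem (by simpa using hj)]
    congr 1
    exact card_equiv σ fun i => by simp
  have hunmatched : #{i ∈ {j}ᶜ | ¬R j (σ i)} = Fintype.card ι - degree R j := by
    have := card_filter_add_card_filter_not (s := ({j}ᶜ : Finset ι)) (fun i => R j (σ i))
    rw [card_compl, card_singleton, hmatched] at this
    omega
  rw [prod_apply_ite, prod_const, prod_const, hmatched, hunmatched, ← mul_assoc,
    mul_factor_pred_pow_mul_factor_pow hdeg_pos hdeg_le]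

end Matchings

section Minor

variable {n : ℕ} (R : Fin (n + 1) → Fin (n + 1) → Prop) [DecidableRel R]

def minor (i k : Fin (n + 1)) : Fin n → Fin n → Prop :=
  fun a b => R (i.succAbove a) (k.succAbove b)

instance (i k : Fin (n + 1)) : DecidableRel (minor R i k) :=
  fun _ _ => by unfold minor; infer_instance

variable {R}

/-- The permutation of `Fin n` induced by `σ` on the complements of `i` and `σ i`. -/
def restrictPerm (σ : Perm (Fin (n + 1))) (i : Fin (n + 1)) : Perm (Fin n) :=
  removeNone ((finSuccEquiv' i).symm.trans (σ.trans (finSuccEquiv' (σ i))))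

lemma succAbove_restrictPerm (σ : Perm (Fin (n + 1))) (i : Fin (n + 1)) (j : Fin n) :
    (σ i).succAbove (restrictPerm σ i j) = σ (i.succAbove j) := by
  set e := (finSuccEquiv' i).symm.trans (σ.trans (finSuccEquiv' (σ i)))
  have he : e (some j) = finSuccEquiv' (σ i) (σ (i.succAbove j)) := by simp [e]
  have hsome : ∃ x, e (some j) = some x := by
    refine Option.ne_none_iff_exists'.mp fun h => Fin.succAbove_ne i j (σ.injective ?_)
    rw [he, ← finSuccEquiv'_at (σ i)] at h
    exact (finSuccEquiv' (σ i)).injective h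
  have := removeNone_some e hsome
  rw [he] at this
  simpa [restrictPerm] using congrArg (finSuccEquiv' (σ i)).symm this

lemma card_filter_apply_eq_le_card_matchings_minor {i k : Fin (n + 1)} :
    #{σ ∈ matchings R | σ i = k} ≤ #(matchings (minor R i k)) := by
  refine card_le_card_of_injOn (restrictPerm · i) (fun σ hσ => ?_) fun σ hσ τ hτ hστ => ?_
  · simp only [coe_filter, mem_matchings, Set.mem_ofPred_eq, mem_coe] at hσ ⊢
    intro j
    rw [minor, ← hσ.2, succAbove_restrictPerm]
    exact hσ.1 _
  · simp only [coe_filter, mem_matchings, Set.mem_ofPred_eq] at hσ hτ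
    ext1 x
    rcases Fin.eq_self_or_eq_succAbove i x with rfl | ⟨j, rfl⟩
    · rw [hσ.2, hτ.2]
    · rw [← succAbove_restrictPerm, ← succAbove_restrictPerm, hσ.2, hτ.2]
      exact congrArg (k.succAbove <| · j) hστ

lemma degree_minor (i k : Fin (n + 1)) (j : Fin n) :
    degree (minor R i k) j =
      if R (i.succAbove j) k then degree R (i.succAbove j) - 1 else degree R (i.succAbove j) := by
  have : ({l | minor R i k j l} : Finset (Fin n)).map k.succAboveEmb =
      ({l | R (i.succAbove j) l} : Finset _).erase k := by
    ext x
    rcases Fin.eq_self_or_eq_succAbove k x with rfl | ⟨l, rfl⟩ <;>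
      simp only [mem_map, mem_erase, mem_filter_univ] <;> simp [minor, Fin.succAbove_ne]
  rw [degree, degree, ← card_map, this, card_erase_eq_ite]
  simp

lemma prod_degree_mul_card_fiber_le
    (ih : ∀ (R' : Fin n → Fin n → Prop) [DecidableRel R'],
      (#(matchings R') : ℝ) ≤ ∏ i, factor (degree R' i))
    {σ : Perm (Fin (n + 1))} (hσ : σ ∈ matchings R) :
    ∏ i, ((degree R i : ℝ) * #{τ ∈ matchings R | τ i = σ i}) ≤
      (∏ i, factor (degree R i)) ^ (n + 1) := by
  have hfiber : ∀ i, (#{τ ∈ matchings R | τ i = σ i} : ℝ) ≤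
      ∏ j ∈ {i}ᶜ, factor (if R j (σ i) then degree R j - 1 else degree R j) := fun i => by
    calc _ ≤ (#(matchings (minor R i (σ i))) : ℝ) := by
          exact_mod_cast card_filter_apply_eq_le_card_matchings_minor
      _ ≤ ∏ j, factor (degree (minor R i (σ i)) j) := ih _
      _ = _ := by
        rw [← Fin.image_succAbove_univ, prod_image Fin.succAbove_right_injective.injOn]
        exact prod_congr rfl fun j _ => by rw [degree_minor]
  calc _ ≤ ∏ i, (degree R i *
          ∏ j ∈ {i}ᶜ, factor (if R j (σ i) then degree R j - 1 else degree R j)) := by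
        gcongr with i
        exact hfiber i
    _ = ∏ j, (degree R j *
          ∏ i ∈ {j}ᶜ, factor (if R j (σ i) then degree R j - 1 else degree R j)) := by
        rw [prod_mul_distrib, prod_mul_distrib,
          prod_comm' (t' := univ) (s' := fun j => {j}ᶜ) (by simp [ne_comm])]
    _ = _ := by
        rw [← prod_pow]
        refine prod_congr rfl fun j _ => ?_
        rw [degree_mul_prod_factor_eq (mem_matchings.mp hσ j), Fintype.card_fin]

end Minor

theorem card_matchings_le_prod_factor :
    ∀ {N : ℕ} (R : Fin N → Fin N → Prop) [DecidableRel R],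
      (#(matchings R) : ℝ) ≤ ∏ i, factor (degree R i)
  | 0, R, _ => by simpa using card_le_univ (matchings R)
  | n + 1, R, _ => by
    set P := #(matchings R)
    have hG : 0 ≤ ∏ i, factor (degree R i) := prod_nonneg fun i _ => (factor_pos _).le
    rcases P.eq_zero_or_pos with hP | hP
    · rwa [hP, Nat.cast_zero]
    refine le_of_pow_le_pow_left₀ (n := P * (n + 1)) (by positivity) hG ?_
    calc (P : ℝ) ^ (P * (n + 1))
        ≤ ∏ σ ∈ matchings R, ∏ i, ((degree R i : ℝ) * #{τ ∈ matchings R | τ i = σ i}) := by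
          simpa using pow_card_matchings_le R
      _ ≤ ∏ σ ∈ matchings R, (∏ i, factor (degree R i)) ^ (n + 1) :=
          prod_le_prod (fun σ _ => prod_nonneg fun i _ => by positivity) fun σ hσ =>
            prod_degree_mul_card_fiber_le (fun R' _ => card_matchings_le_prod_factor R') hσ
      _ = (∏ i, factor (degree R i)) ^ (P * (n + 1)) := by rw [prod_const, ← pow_mul, mul_comm]

theorem permanent_le_prod_factor {N : ℕ} {A : Matrix (Fin N) (Fin N) ℕ}
    {R : Fin N → Fin N → Prop} [DecidableRel R] (hA : ∀ i j, A i j = if R i j then 1 else 0) :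
    (A.permanent : ℝ) ≤ ∏ i, factor (degree R i) := by
  rw [permanent_eq_card_matchings hA]
  exact card_matchings_le_prod_factor R

end Bregman

open Bregman

theorem bregman_minc_regular_general {n r : ℕ}
    (A : Matrix (Fin n) (Fin n) ℕ)
    (h01 : ∀ i j, A i j = 0 ∨ A i j = 1)
    (hrow : ∀ i, (univ.filter fun j => A i j = 1).card = r) :
    (A.permanent : ℝ) ≤ (r.factorial : ℝ) ^ ((n : ℝ) / r) := by
  -- instance search does not find `DecidableRel fun i j => A i j = 1` through `Matrix`
  classical
  refine (permanent_le_prod_factor (R := fun i j => A i j = 1) fun i j => ?_).trans_eq ?_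
  · rcases h01 i j with h | h <;> simp [h]
  have hdeg : ∀ i, degree (fun i j => A i j = 1) i = r := fun i => by
    rw [← hrow i, degree]
    congr
  simp only [hdeg, prod_const, card_univ, Fintype.card_fin]
  exact factor_pow_eq_rpow r n

/-- Regular-row-sum special case of the Bregman–Minc inequality: if every row of an
`n × n` (0,1)-matrix has exactly `r` ones (`1 ≤ r ≤ n`), then
`per A ≤ (r !) ^ (n / r)`. -/
theorem bregman_minc_regular {n r : ℕ} (hr1 : 1 ≤ r) (hrn : r ≤ n)
    (A : Matrix (Fin n) (Fin n) ℕ)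
    (h01 : ∀ i j, A i j = 0 ∨ A i j = 1)
    (hrow : ∀ i, (univ.filter fun j => A i j = 1).card = r) :
    (A.permanent : ℝ) ≤ (r.factorial : ℝ) ^ ((n : ℝ) / r) :=
  bregman_minc_regular_general A h01 hrow
end

section
/- The number of solutions to the 2×2 Sudoku is at most 384, where 384 = S_U(2) is Herzberg's permanent-based upper bound. -/
/-- A 2×2 Sudoku solution: each row, each column, and each of the four 2×2 blocks
contains each digit exactly once. -/
def IsSudoku2 (f : Fin 4 × Fin 4 → Fin 4) : Prop :=
  (∀ p q : Fin 4 × Fin 4, p.1 = q.1 → f p = f q → p = q) ∧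
  (∀ p q : Fin 4 × Fin 4, p.2 = q.2 → f p = f q → p = q) ∧
  (∀ p q : Fin 4 × Fin 4, (p.1 : ℕ) / 2 = (q.1 : ℕ) / 2 →
    (p.2 : ℕ) / 2 = (q.2 : ℕ) / 2 → f p = f q → p = q)

namespace Sudoku2Aux

lemma rne {F : Fin 4 × Fin 4 → Fin 4} (h : IsSudoku2 F) {i j j' : Fin 4} (hjj : j ≠ j') :
    F (i, j) ≠ F (i, j') :=
  fun he => hjj (congrArg Prod.snd (h.1 (i, j) (i, j') rfl he))

lemma cne {F : Fin 4 × Fin 4 → Fin 4} (h : IsSudoku2 F) {i i' j : Fin 4} (hii : i ≠ i') :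
    F (i, j) ≠ F (i', j) :=
  fun he => hii (congrArg Prod.fst (h.2.1 (i, j) (i', j) rfl he))

lemma bne {F : Fin 4 × Fin 4 → Fin 4} (h : IsSudoku2 F) {i i' j j' : Fin 4}
    (h1 : (i : ℕ) / 2 = (i' : ℕ) / 2) (h2 : (j : ℕ) / 2 = (j' : ℕ) / 2) (hne : j ≠ j') :
    F (i, j) ≠ F (i', j') :=
  fun he => hne (congrArg Prod.snd (h.2.2 (i, j) (i', j') h1 h2 he))

set_option synthInstance.maxSize 400 in
set_option maxHeartbeats 1000000 in
lemma L2 : ∀ x y a b a' b' : Fin 4, x ≠ y → a ≠ b → a' ≠ b' → a ≠ x → a ≠ y → b ≠ x → b ≠ y →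
    a' ≠ x → a' ≠ y → b' ≠ x → b' ≠ y → ((a < b) ↔ (a' < b')) → a = a' ∧ b = b' := by decide

lemma L6 : ∀ c1 c2 c3 x y : Fin 4, c1 ≠ c2 → c1 ≠ c3 → c2 ≠ c3 →
    x ≠ c1 → x ≠ c2 → x ≠ c3 → y ≠ c1 → y ≠ c2 → y ≠ c3 → x = y := by decide

set_option synthInstance.maxSize 400 in
set_option maxHeartbeats 1000000 in
lemma L5 : ∀ p q u v x w t y : Fin 4, p ≠ q → u ≠ v → x ≠ p → x ≠ q → x ≠ u → x ≠ v →
    w ≠ p → w ≠ q → w ≠ x → t ≠ u → t ≠ v → t ≠ x → w ≠ t →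
    y ≠ p → y ≠ q → y ≠ u → y ≠ v → y = x := by decide

noncomputable def enc (f : {f : Fin 4 × Fin 4 → Fin 4 // IsSudoku2 f}) :
    Equiv.Perm (Fin 4) × Bool × Bool × Bool × Bool :=
  (Equiv.ofBijective (fun j => f.1 (0, j))
      (Finite.injective_iff_bijective.1 fun j k h =>
        congrArg Prod.snd (f.2.1 (0, j) (0, k) rfl h)),
   decide (f.1 (1, 0) < f.1 (1, 1)),
   decide (f.1 (1, 2) < f.1 (1, 3)),
   decide (f.1 (2, 0) < f.1 (3, 0)),
   decide (f.1 (2, 1) < f.1 (3, 1)))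

lemma enc_inj : Function.Injective enc := by
  rintro ⟨F, hF⟩ ⟨G, hG⟩ h
  simp only [enc, Prod.mk.injEq] at h
  obtain ⟨he, hb1, hb2, hb3, hb4⟩ := h
  have h0 : ∀ j : Fin 4, F (0, j) = G (0, j) := fun j => DFunLike.congr_fun he j
  -- row 1, left block
  have h10 : F (1, 0) = G (1, 0) ∧ F (1, 1) = G (1, 1) := by
    refine L2 (F (0, 0)) (F (0, 1)) _ _ _ _ (rne hF (by decide)) (rne hF (by decide))
      (rne hG (by decide)) (cne hF (by decide)) (bne hF (by decide) (by decide) (by decide))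
      (bne hF (by decide) (by decide) (by decide)) (cne hF (by decide))
      ?_ ?_ ?_ ?_ (decide_eq_decide.1 hb1)
    · rw [h0 0]; exact cne hG (by decide)
    · rw [h0 1]; exact bne hG (by decide) (by decide) (by decide)
    · rw [h0 0]; exact bne hG (by decide) (by decide) (by decide)
    · rw [h0 1]; exact cne hG (by decide)
  -- row 1, right block
  have h12 : F (1, 2) = G (1, 2) ∧ F (1, 3) = G (1, 3) := by
    refine L2 (F (0, 2)) (F (0, 3)) _ _ _ _ (rne hF (by decide)) (rne hF (by decide))
      (rne hG (by decide)) (cne hF (by decide)) (bne hF (by decide) (by decide) (by decide))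
      (bne hF (by decide) (by decide) (by decide)) (cne hF (by decide))
      ?_ ?_ ?_ ?_ (decide_eq_decide.1 hb2)
    · rw [h0 2]; exact cne hG (by decide)
    · rw [h0 3]; exact bne hG (by decide) (by decide) (by decide)
    · rw [h0 2]; exact bne hG (by decide) (by decide) (by decide)
    · rw [h0 3]; exact cne hG (by decide)
  -- column 0, bottom
  have h20 : F (2, 0) = G (2, 0) ∧ F (3, 0) = G (3, 0) := by
    refine L2 (F (0, 0)) (F (1, 0)) _ _ _ _ (cne hF (by decide)) (cne hF (by decide))
      (cne hG (by decide)) (cne hF (by decide)) (cne hF (by decide))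
      (cne hF (by decide)) (cne hF (by decide))
      ?_ ?_ ?_ ?_ (decide_eq_decide.1 hb3)
    · rw [h0 0]; exact cne hG (by decide)
    · rw [h10.1]; exact cne hG (by decide)
    · rw [h0 0]; exact cne hG (by decide)
    · rw [h10.1]; exact cne hG (by decide)
  -- column 1, bottom
  have h21 : F (2, 1) = G (2, 1) ∧ F (3, 1) = G (3, 1) := by
    refine L2 (F (0, 1)) (F (1, 1)) _ _ _ _ (cne hF (by decide)) (cne hF (by decide))
      (cne hG (by decide)) (cne hF (by decide)) (cne hF (by decide))
      (cne hF (by decide)) (cne hF (by decide))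
      ?_ ?_ ?_ ?_ (decide_eq_decide.1 hb4)
    · rw [h0 1]; exact cne hG (by decide)
    · rw [h10.2]; exact cne hG (by decide)
    · rw [h0 1]; exact cne hG (by decide)
    · rw [h10.2]; exact cne hG (by decide)
  -- cell (2,2) via L5
  have h22 : F (2, 2) = G (2, 2) := by
    refine (L5 (F (2, 0)) (F (2, 1)) (F (0, 2)) (F (1, 2)) (F (2, 2)) (F (2, 3)) (F (3, 2)) _
      (rne hF (by decide)) (cne hF (by decide))
      (rne hF (by decide)) (rne hF (by decide)) (cne hF (by decide)) (cne hF (by decide))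
      (rne hF (by decide)) (rne hF (by decide)) (rne hF (by decide))
      (cne hF (by decide)) (cne hF (by decide)) (cne hF (by decide))
      (bne hF (by decide) (by decide) (by decide))
      ?_ ?_ ?_ ?_).symm
    · rw [h20.1]; exact rne hG (by decide)
    · rw [h21.1]; exact rne hG (by decide)
    · rw [h0 2]; exact cne hG (by decide)
    · rw [h12.1]; exact cne hG (by decide)
  -- cell (2,3) via L6 (row 2)
  have h23 : F (2, 3) = G (2, 3) := by
    refine L6 (F (2, 0)) (F (2, 1)) (F (2, 2)) _ _ (rne hF (by decide)) (rne hF (by decide))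
      (rne hF (by decide)) (rne hF (by decide)) (rne hF (by decide)) (rne hF (by decide))
      ?_ ?_ ?_
    · rw [h20.1]; exact rne hG (by decide)
    · rw [h21.1]; exact rne hG (by decide)
    · rw [h22]; exact rne hG (by decide)
  -- row 3 via L6 (columns)
  have h30 : F (3, 0) = G (3, 0) := h20.2
  have h31 : F (3, 1) = G (3, 1) := h21.2
  have h32 : F (3, 2) = G (3, 2) := by
    refine L6 (F (0, 2)) (F (1, 2)) (F (2, 2)) _ _ (cne hF (by decide)) (cne hF (by decide))
      (cne hF (by decide)) (cne hF (by decide)) (cne hF (by decide)) (cne hF (by decide))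
      ?_ ?_ ?_
    · rw [h0 2]; exact cne hG (by decide)
    · rw [h12.1]; exact cne hG (by decide)
    · rw [h22]; exact cne hG (by decide)
  have h33 : F (3, 3) = G (3, 3) := by
    refine L6 (F (0, 3)) (F (1, 3)) (F (2, 3)) _ _ (cne hF (by decide)) (cne hF (by decide))
      (cne hF (by decide)) (cne hF (by decide)) (cne hF (by decide)) (cne hF (by decide))
      ?_ ?_ ?_
    · rw [h0 3]; exact cne hG (by decide)
    · rw [h12.2]; exact cne hG (by decide)
    · rw [h23]; exact cne hG (by decide)
  have h00 := h0 0; have h01 := h0 1; have h02 := h0 2; have h03 := h0 3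
  have h10' := h10.1; have h11' := h10.2; have h12' := h12.1; have h13' := h12.2
  have h20' := h20.1; have h21' := h21.1
  refine Subtype.ext (funext fun p => ?_)
  obtain ⟨i, j⟩ := p
  fin_cases i <;> fin_cases j <;> assumption

end Sudoku2Aux

/-- The number of solutions to the 2×2 Sudoku is at most 384 (Herzberg's bound S_U(2)). -/
theorem card_sudoku2_le : Nat.card {f : Fin 4 × Fin 4 → Fin 4 // IsSudoku2 f} ≤ 384 := by
  have h := Nat.card_le_card_of_injective _ Sudoku2Aux.enc_inj
  calc Nat.card {f : Fin 4 × Fin 4 → Fin 4 // IsSudoku2 f}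
      ≤ Nat.card (Equiv.Perm (Fin 4) × Bool × Bool × Bool × Bool) := h
    _ = 384 := by
        simp [Nat.card_eq_fintype_card, Fintype.card_perm, Nat.factorial]
end

section
/- The number of solutions S(n) to an n×n Sudoku satisfies S(n) ≤ ∏_{i=1}^n (∏_{j=1}^i μ(i,j)) · (∏_{j=i+1}^n ν(j)), where μ(i,j) = ((n²−(i−1)n−(j−1))!)^{n²/(n²−(i−1)n−(j−1))} and ν(j) = ((n²−(j−1)n)!)^{n²/(n²−(j−1)n)}. -/
/-!
Fill the grid row by row. Once the first `k` rows of a solution are fixed, row `k` is a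
permutation `σ` of the symbols in which `σ c` avoids the `k` values above it in column `c`, and
also the `(k % n) * n` values above it in the block of `c`. Keeping whichever of the two
constraints excludes more values, every cell of the row has exactly `m` admissible symbols, so the
row has at most `(m!) ^ (n² / m)` completions by the Bregman–Minc inequality for a `0-1` matrix
with row sums `m`.

Bregman–Minc is proved by Radhakrishnan's argument, in counting form. Reveal the entries of a
transversal `σ` of `A` in an order `τ` and let `R_τ(σ, k)` be the number of values still available
for `σ k`. The products `∏ k, 1 / R_τ(σ, k)` sum to at most one over the transversals (a Kraft
inequality), so AM-GM gives `p ^ p ≤ ∏ σ, ∏ k, R_τ(σ, k)` for `p` transversals. Over all orders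
`τ`, the rank of `k` among the `r = #(A k)` indices `t` with `σ t ∈ A k` is uniformly distributed,
whence `∏ τ, R_τ(σ, k) = (r!) ^ (N! / r)` and `p ≤ ∏ k, (r_k!) ^ (1 / r_k)`.
-/

open Finset

/-- An `n × n` Sudoku solution: a function on the `n² × n²` grid injective on each
row, each column, and each of the `n²` blocks of size `n × n`. -/
def IsSudoku (n : ℕ) (f : Fin (n ^ 2) × Fin (n ^ 2) → Fin (n ^ 2)) : Prop :=
  (∀ p q : Fin (n ^ 2) × Fin (n ^ 2), p.1 = q.1 → f p = f q → p = q) ∧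
  (∀ p q : Fin (n ^ 2) × Fin (n ^ 2), p.2 = q.2 → f p = f q → p = q) ∧
  (∀ p q : Fin (n ^ 2) × Fin (n ^ 2), (p.1 : ℕ) / n = (q.1 : ℕ) / n →
    (p.2 : ℕ) / n = (q.2 : ℕ) / n → f p = f q → p = q)

open scoped Nat

theorem card_pow_card_le_prod_of_sum_inv_le_one {ι : Type*} (s : Finset ι) (x : ι → ℝ)
    (hx : ∀ i ∈ s, 0 < x i) (h : ∑ i ∈ s, (x i)⁻¹ ≤ 1) : (#s : ℝ) ^ #s ≤ ∏ i ∈ s, x i := by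
  rcases s.eq_empty_or_nonempty with rfl | hs
  · simp
  have hcard : (0 : ℝ) < #s := by exact_mod_cast hs.card_pos
  have hprod : 0 < ∏ i ∈ s, x i := prod_pos hx
  have amgm := Real.geom_mean_le_arith_mean s (fun _ => 1) (fun i => (x i)⁻¹)
    (fun _ _ => zero_le_one) (by simpa using hcard) (fun i hi => (inv_pos.2 (hx i hi)).le)
  simp only [Real.rpow_one, sum_const, nsmul_eq_mul, mul_one, one_mul, prod_inv_distrib] at amgm
  have hroot : (∏ i ∈ s, x i)⁻¹ ≤ ((#s : ℝ)⁻¹) ^ #s := by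
    calc (∏ i ∈ s, x i)⁻¹ = (((∏ i ∈ s, x i)⁻¹) ^ (#s : ℝ)⁻¹) ^ #s := by
          rw [← Real.rpow_natCast, ← Real.rpow_mul (by positivity),
            inv_mul_cancel₀ hcard.ne', Real.rpow_one]
      _ ≤ ((#s : ℝ)⁻¹) ^ #s := by
          gcongr
          exact amgm.trans (div_le_div_of_nonneg_right h hcard.le |>.trans_eq (one_div _))
  rwa [inv_pow, inv_le_inv₀ hprod (by positivity)] at hroot

theorem card_filter_apply_mem_of_bijective {α β : Type*} [Fintype α] [DecidableEq β]
    {σ : α → β} (hσ : Function.Bijective σ) (s : Finset β) : #{t | σ t ∈ s} = #s := by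
  rw [← card_map (Equiv.ofBijective σ hσ).toEmbedding]
  congr 1
  ext y
  obtain ⟨t, rfl⟩ := hσ.2 y
  simp

section Rank

variable {α : Type*} [LinearOrder α]

def Finset.rank (T : Finset α) (τ : Equiv.Perm α) (x : α) : ℕ := #{t ∈ T | τ t < τ x}

theorem Finset.rank_lt_card {T : Finset α} (τ : Equiv.Perm α) {x : α} (hx : x ∈ T) :
    T.rank τ x < #T :=
  card_lt_card (filter_ssubset.2 ⟨x, hx, lt_irrefl _⟩)

theorem Finset.rank_injOn (T : Finset α) (τ : Equiv.Perm α) : Set.InjOn (T.rank τ) T := by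
  have hmono : ∀ {x y}, x ∈ T → τ x < τ y → T.rank τ x < T.rank τ y := fun hx hxy =>
    card_lt_card ⟨fun t ht => mem_filter.2 ⟨(mem_filter.1 ht).1, (mem_filter.1 ht).2.trans hxy⟩,
      fun h => lt_irrefl _ (mem_filter.1 (h (mem_filter.2 ⟨hx, hxy⟩))).2⟩
  intro x hx y hy h
  rcases lt_trichotomy (τ x) (τ y) with hxy | hxy | hxy
  · exact absurd h (hmono hx hxy).ne
  · exact τ.injective hxy
  · exact absurd h (hmono hy hxy).ne'

theorem Finset.prod_card_sub_rank (T : Finset α) (τ : Equiv.Perm α) :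
    ∏ x ∈ T, (#T - T.rank τ x) = (#T)! := by
  have himage : T.image (T.rank τ) = range #T :=
    eq_of_subset_of_card_le (fun s hs => by
        obtain ⟨x, hx, rfl⟩ := mem_image.1 hs
        exact mem_range.2 (T.rank_lt_card τ hx))
      (by rw [card_range, card_image_of_injOn (T.rank_injOn τ)])
  rw [← prod_image (f := fun s => #T - s) (T.rank_injOn τ), himage,
    ← prod_range_reflect, ← prod_range_add_one_eq_factorial]
  exact prod_congr rfl fun s hs => by have := mem_range.1 hs; omega

theorem Finset.rank_mul_swap {T : Finset α} (τ : Equiv.Perm α) {x y : α} (hx : x ∈ T)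
    (hy : y ∈ T) : T.rank (τ * Equiv.swap x y) x = T.rank τ y := by
  have hswap : ∀ t, Equiv.swap x y t ∈ T ↔ t ∈ T := fun t => by
    rcases eq_or_ne t x with rfl | htx
    · simp [hx, hy]
    rcases eq_or_ne t y with rfl | hty
    · simp [hx, hy]
    rw [Equiv.swap_apply_of_ne_of_ne htx hty]
  refine card_nbij' (Equiv.swap x y) (Equiv.swap x y) (fun t ht => ?_) (fun t ht => ?_)
    (fun t _ => Equiv.swap_apply_self _ _ _) (fun t _ => Equiv.swap_apply_self _ _ _)
  · simp only [coe_filter, Set.mem_ofPred_eq, Equiv.Perm.mul_apply, Equiv.swap_apply_left] at ht ⊢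
    exact ⟨(hswap t).2 ht.1, ht.2⟩
  · simp only [coe_filter, Set.mem_ofPred_eq, Equiv.Perm.mul_apply, Equiv.swap_apply_left,
      Equiv.swap_apply_self] at ht ⊢
    exact ⟨(hswap t).2 ht.1, ht.2⟩

theorem Finset.prod_perm_card_sub_rank [Fintype α] {T : Finset α} {x : α} (hx : x ∈ T) :
    ∏ τ : Equiv.Perm α, ((#T - T.rank τ x : ℕ) : ℝ) =
      ((#T)! : ℝ) ^ (((Fintype.card α)! : ℝ) / #T) := by
  set Y := ∏ τ : Equiv.Perm α, ((#T - T.rank τ x : ℕ) : ℝ)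
  have hY : ∀ y ∈ T, ∏ τ : Equiv.Perm α, ((#T - T.rank τ y : ℕ) : ℝ) = Y := fun y hy => by
    simp_rw [← T.rank_mul_swap _ hx hy]
    exact Equiv.prod_comp (Equiv.mulRight (Equiv.swap x y)) fun τ => ((#T - T.rank τ x : ℕ) : ℝ)
  have hpow : Y ^ #T = ((#T)! : ℝ) ^ (Fintype.card α)! := by
    rw [← prod_const, ← prod_congr rfl hY, prod_comm]
    simp_rw [← Nat.cast_prod, T.prod_card_sub_rank]
    rw [prod_const, card_univ, Fintype.card_perm, Nat.cast_pow]
  have hT : (0 : ℝ) < #T := by exact_mod_cast card_pos.2 ⟨x, hx⟩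
  have hY0 : 0 ≤ Y := prod_nonneg fun _ _ => Nat.cast_nonneg _
  rw [div_eq_mul_inv, Real.rpow_mul (by positivity), Real.rpow_natCast, ← hpow,
    ← Real.rpow_natCast, ← Real.rpow_mul hY0, mul_inv_cancel₀ hT.ne', Real.rpow_one]

end Rank

namespace BregmanMinc

variable {N : ℕ}

def transversals (A : Fin N → Finset (Fin N)) : Finset (Fin N → Fin N) :=
  {σ | Function.Injective σ ∧ ∀ k, σ k ∈ A k}

theorem mem_transversals {A : Fin N → Finset (Fin N)} {σ : Fin N → Fin N} :
    σ ∈ transversals A ↔ Function.Injective σ ∧ ∀ k, σ k ∈ A k := by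
  simp [transversals]

def remaining (A : Fin N → Finset (Fin N)) (τ : Equiv.Perm (Fin N)) (σ : Fin N → Fin N)
    (k : Fin N) : ℕ :=
  #(A k \ ({t | τ t < τ k} : Finset (Fin N)).image σ)

theorem remaining_pos {A : Fin N → Finset (Fin N)} {σ : Fin N → Fin N}
    (hσ : σ ∈ transversals A) (τ : Equiv.Perm (Fin N)) (k : Fin N) : 0 < remaining A τ σ k := by
  obtain ⟨hinj, hmem⟩ := mem_transversals.1 hσ
  refine card_pos.2 ⟨σ k, mem_sdiff.2 ⟨hmem k, ?_⟩⟩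
  simp [hinj.eq_iff]

theorem filter_le_perm_eq_insert (τ : Equiv.Perm (Fin N)) {k : ℕ} (hk : k < N) :
    ({t | k ≤ (τ t : ℕ)} : Finset (Fin N)) =
      insert (τ.symm ⟨k, hk⟩) ({t | k + 1 ≤ (τ t : ℕ)} : Finset (Fin N)) := by
  ext t
  simp only [mem_filter, mem_univ, true_and, mem_insert, Equiv.eq_symm_apply, Fin.ext_iff]
  omega

theorem agree_succ_iff (τ : Equiv.Perm (Fin N)) {k : ℕ} (hk : k < N) (ρ σ : Fin N → Fin N)
    (y : Fin N) :
    (∀ t, (τ t : ℕ) < k + 1 → σ t = Function.update ρ (τ.symm ⟨k, hk⟩) y t) ↔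
      (∀ t, (τ t : ℕ) < k → σ t = ρ t) ∧ σ (τ.symm ⟨k, hk⟩) = y := by
  have hne : ∀ t, (τ t : ℕ) < k → t ≠ τ.symm ⟨k, hk⟩ := by
    rintro t ht rfl
    simp at ht
  refine ⟨fun h => ⟨fun t ht => ?_, ?_⟩, fun ⟨hρ, hy⟩ t ht => ?_⟩
  · rw [h t (by omega), Function.update_of_ne (hne t ht)]
  · rw [h _ (by simp), Function.update_self]
  · rcases Nat.lt_succ_iff_lt_or_eq.1 ht with ht | ht
    · rw [Function.update_of_ne (hne t ht), hρ t ht]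
    · rw [show t = τ.symm ⟨k, hk⟩ by simp [Equiv.eq_symm_apply, Fin.ext_iff, ht], hy,
        Function.update_self]

theorem sum_prod_inv_remaining_le_one_of_agree (A : Fin N → Finset (Fin N))
    (τ : Equiv.Perm (Fin N)) {k : ℕ} (hk : k ≤ N) (ρ : Fin N → Fin N) :
    ∑ σ ∈ transversals A with ∀ t, (τ t : ℕ) < k → σ t = ρ t,
      ∏ t with k ≤ (τ t : ℕ), (remaining A τ σ t : ℝ)⁻¹ ≤ 1 := by
  induction hk using Nat.decreasingInduction generalizing ρ with
  | self =>
    have hnone : ({t | N ≤ (τ t : ℕ)} : Finset (Fin N)) = ∅ :=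
      filter_false_of_mem fun t _ => by omega
    have hsub : #{σ ∈ transversals A | ∀ t, (τ t : ℕ) < N → σ t = ρ t} ≤ 1 :=
      card_le_one.2 fun σ hσ σ' hσ' => funext fun t => by
        rw [(mem_filter.1 hσ).2 t (τ t).isLt, (mem_filter.1 hσ').2 t (τ t).isLt]
    simpa [hnone] using hsub
  | of_succ k hk ih =>
    set x := τ.symm ⟨k, hk⟩
    set S := {σ ∈ transversals A | ∀ t, (τ t : ℕ) < k → σ t = ρ t}
    set D := A x \ ({t | τ t < τ x} : Finset (Fin N)).image ρ
    have hbefore : ∀ t, τ t < τ x ↔ (τ t : ℕ) < k := fun t => by simp [x, Fin.lt_def]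
    have hremaining : ∀ σ ∈ S, remaining A τ σ x = #D := fun σ hσ => by
      refine congrArg card (congrArg _ (image_congr fun t ht => ?_))
      exact (mem_filter.1 hσ).2 t ((hbefore t).1 (by simpa using ht))
    have hmaps : ∀ σ ∈ S, σ x ∈ D := fun σ hσ => by
      obtain ⟨hinj, hmem⟩ := mem_transversals.1 (mem_filter.1 hσ).1
      refine mem_sdiff.2 ⟨hmem x, fun hρ => ?_⟩
      obtain ⟨t, ht, hσt⟩ := mem_image.1 hρ
      have htx : τ t < τ x := by simpa using ht
      rw [← (mem_filter.1 hσ).2 t ((hbefore t).1 htx)] at hσt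
      exact htx.ne (congrArg τ (hinj hσt))
    have hx : x ∉ ({t | k + 1 ≤ (τ t : ℕ)} : Finset (Fin N)) := by simp [x]
    calc ∑ σ ∈ S, ∏ t with k ≤ (τ t : ℕ), (remaining A τ σ t : ℝ)⁻¹
        = ∑ y ∈ D, ∑ σ ∈ S with σ x = y,
            (#D : ℝ)⁻¹ * ∏ t with k + 1 ≤ (τ t : ℕ), (remaining A τ σ t : ℝ)⁻¹ := by
          rw [sum_fiberwise_of_maps_to hmaps]
          refine sum_congr rfl fun σ hσ => ?_
          rw [filter_le_perm_eq_insert τ hk, prod_insert hx, hremaining σ hσ]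
      _ ≤ ∑ _y ∈ D, (#D : ℝ)⁻¹ := by
          refine sum_le_sum fun y _ => ?_
          have hfiber : {σ ∈ S | σ x = y} =
              {σ ∈ transversals A | ∀ t, (τ t : ℕ) < k + 1 → σ t = Function.update ρ x y t} := by
            rw [filter_filter]
            exact filter_congr fun σ _ => (agree_succ_iff τ hk ρ σ y).symm
          rw [← mul_sum, hfiber]
          exact mul_le_of_le_one_right (by positivity) (ih _)
      _ ≤ 1 := by
          rw [sum_const, nsmul_eq_mul]
          exact mul_inv_le_one

theorem sum_prod_inv_remaining_le_one (A : Fin N → Finset (Fin N)) (τ : Equiv.Perm (Fin N)) :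
    ∑ σ ∈ transversals A, ∏ t, (remaining A τ σ t : ℝ)⁻¹ ≤ 1 := by
  simpa using sum_prod_inv_remaining_le_one_of_agree A τ (Nat.zero_le N) id

theorem card_pow_card_le_prod_remaining (A : Fin N → Finset (Fin N)) (τ : Equiv.Perm (Fin N)) :
    (#(transversals A) : ℝ) ^ #(transversals A) ≤
      ∏ σ ∈ transversals A, ∏ t, (remaining A τ σ t : ℝ) := by
  refine card_pow_card_le_prod_of_sum_inv_le_one _ _
    (fun σ hσ => prod_pos fun t _ => by exact_mod_cast remaining_pos hσ τ t) ?_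
  simpa only [prod_inv_distrib] using sum_prod_inv_remaining_le_one A τ

theorem remaining_eq_card_sub_rank {A : Fin N → Finset (Fin N)} {σ : Fin N → Fin N}
    (hσ : σ ∈ transversals A) (τ : Equiv.Perm (Fin N)) (k : Fin N) :
    remaining A τ σ k = #{t | σ t ∈ A k} - ({t | σ t ∈ A k} : Finset (Fin N)).rank τ k := by
  have hinj := (mem_transversals.1 hσ).1
  have hsurj := (Finite.injective_iff_bijective.1 hinj).2
  have hunranked : A k \ ({t | τ t < τ k} : Finset (Fin N)).image σ =
      ({t | σ t ∈ A k ∧ ¬ τ t < τ k} : Finset (Fin N)).image σ := by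
    ext y
    obtain ⟨t, rfl⟩ := hsurj y
    simp [hinj.eq_iff]
  have hsplit := card_filter_add_card_filter_not (s := {t | σ t ∈ A k}) fun t => τ t < τ k
  rw [remaining, hunranked, card_image_of_injective _ hinj, Finset.rank, ← filter_filter]
  omega

theorem card_transversals_le (A : Fin N → Finset (Fin N)) :
    (#(transversals A) : ℝ) ≤ ∏ k, ((#(A k))! : ℝ) ^ (#(A k) : ℝ)⁻¹ := by
  set p := #(transversals A)
  rcases Nat.eq_zero_or_pos p with hp | hp
  · rw [hp, Nat.cast_zero]
    positivity
  have hpow : (p : ℝ) ^ (p * N !) ≤ (∏ k, ((#(A k))! : ℝ) ^ (#(A k) : ℝ)⁻¹) ^ (p * N !) :=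
    calc (p : ℝ) ^ (p * N !) = ∏ _τ : Equiv.Perm (Fin N), (p : ℝ) ^ p := by
          rw [prod_const, card_univ, Fintype.card_perm, Fintype.card_fin, pow_mul]
      _ ≤ ∏ τ : Equiv.Perm (Fin N), ∏ σ ∈ transversals A, ∏ k, (remaining A τ σ k : ℝ) :=
          prod_le_prod (fun _ _ => by positivity) fun τ _ => card_pow_card_le_prod_remaining A τ
      _ = ∏ _σ ∈ transversals A, ∏ k, ((#(A k))! : ℝ) ^ ((N ! : ℝ) / #(A k)) := by
          rw [prod_comm]
          refine prod_congr rfl fun σ hσ => ?_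
          rw [prod_comm]
          refine prod_congr rfl fun k _ => ?_
          obtain ⟨hinj, hmem⟩ := mem_transversals.1 hσ
          have hk : k ∈ ({t | σ t ∈ A k} : Finset (Fin N)) := mem_filter.2 ⟨mem_univ k, hmem k⟩
          simp_rw [remaining_eq_card_sub_rank hσ]
          rw [prod_perm_card_sub_rank hk, Fintype.card_fin,
            card_filter_apply_mem_of_bijective (Finite.injective_iff_bijective.1 hinj)]
      _ = (∏ k, ((#(A k))! : ℝ) ^ (#(A k) : ℝ)⁻¹) ^ (p * N !) := by
          simp_rw [div_eq_mul_inv, mul_comm (N ! : ℝ), Real.rpow_mul (Nat.cast_nonneg _),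
            Real.rpow_natCast]
          rw [prod_pow, prod_const, ← pow_mul, mul_comm]
  exact (pow_le_pow_iff_left₀ (by positivity) (by positivity) (by positivity)).1 hpow

theorem card_transversals_le_of_card_eq {A : Fin N → Finset (Fin N)} {m : ℕ}
    (hA : ∀ k, #(A k) = m) : (#(transversals A) : ℝ) ≤ (m ! : ℝ) ^ ((N : ℝ) / m) := by
  refine (card_transversals_le A).trans_eq ?_
  simp_rw [hA]
  rw [prod_const, card_univ, Fintype.card_fin, ← Real.rpow_natCast, ← Real.rpow_mul
    (Nat.cast_nonneg _), inv_mul_eq_div]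

end BregmanMinc

theorem Fin.card_filter_val_mem_Ico {N a b : ℕ} (hb : b ≤ N) :
    #{r : Fin N | (r : ℕ) ∈ Ico a b} = b - a := by
  rw [← Nat.card_Ico a b, ← card_image_of_injective _ Fin.val_injective]
  congr 1
  ext x
  simp only [mem_image, mem_filter, mem_univ, true_and, mem_Ico]
  exact ⟨fun ⟨r, hr, hx⟩ => hx ▸ hr, fun h => ⟨⟨x, by omega⟩, h, rfl⟩⟩

theorem Finset.prod_range_mul_eq_prod_prod {M : Type*} [CommMonoid M] (f : ℕ → M) (a b : ℕ) :
    ∏ k ∈ range (a * b), f k = ∏ i ∈ range a, ∏ j ∈ range b, f (i * b + j) := by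
  induction a with
  | zero => simp
  | succ a ih => rw [Nat.succ_mul, prod_range_add, ih, prod_range_succ]

namespace Sudoku

variable {n : ℕ}

abbrev Cell (n : ℕ) := Fin (n ^ 2) × Fin (n ^ 2)

def truncate (k : ℕ) (f : Cell n → Fin (n ^ 2)) : Cell n → Fin (n ^ 2) :=
  fun p => if (p.1 : ℕ) < k then f p else p.2

theorem truncate_truncate {k l : ℕ} (h : k ≤ l) (f : Cell n → Fin (n ^ 2)) :
    truncate k (truncate l f) = truncate k f := by
  funext p
  simp only [truncate]
  split_ifs <;> first | rfl | omega

theorem truncate_sq (f : Cell n → Fin (n ^ 2)) : truncate (n ^ 2) f = f :=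
  funext fun p => if_pos p.1.isLt

theorem truncate_succ_eq_of_row_eq {f₁ f₂ : Cell n → Fin (n ^ 2)} {k : Fin (n ^ 2)}
    (htrunc : truncate k f₁ = truncate k f₂) (hrow : ∀ c, f₁ (k, c) = f₂ (k, c)) :
    truncate (k + 1) f₁ = truncate (k + 1) f₂ := by
  funext ⟨r, c⟩
  rcases lt_trichotomy (r : ℕ) k with hr | hr | hr
  · simpa [truncate, hr, hr.le] using congrFun htrunc (r, c)
  · obtain rfl : r = k := Fin.ext hr
    simp [truncate, hrow c]
  · simp [truncate, show ¬ (r : ℕ) < k + 1 by omega]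

open scoped Classical in
/-- Solutions restricted to their first `k` rows; the other rows are overwritten with a
placeholder independent of the solution, so that restrictions can be compared as grids. -/
noncomputable def partialSudokus (n k : ℕ) : Finset (Cell n → Fin (n ^ 2)) :=
  ({f | IsSudoku n f} : Finset _).image (truncate k)

theorem mem_partialSudokus {k : ℕ} {g : Cell n → Fin (n ^ 2)} :
    g ∈ partialSudokus n k ↔ ∃ f, IsSudoku n f ∧ truncate k f = g := by
  simp [partialSudokus]

theorem card_partialSudokus_zero_le_one : #(partialSudokus n 0) ≤ 1 :=
  card_le_one.2 fun g₁ hg₁ g₂ hg₂ => by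
    obtain ⟨f₁, -, rfl⟩ := mem_partialSudokus.1 hg₁
    obtain ⟨f₂, -, rfl⟩ := mem_partialSudokus.1 hg₂
    rfl

theorem card_partialSudokus_sq :
    #(partialSudokus n (n ^ 2)) = Nat.card {f : Cell n → Fin (n ^ 2) // IsSudoku n f} := by
  classical
  rw [partialSudokus, show truncate (n ^ 2) = id from funext truncate_sq, image_id,
    Nat.card_eq_fintype_card, Fintype.card_subtype]

def IsConstraint {α : Type*} (n : ℕ) (key : Cell n → α) : Prop :=
  ∀ f, IsSudoku n f → ∀ p q, key p = key q → f p = f q → p = q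

theorem isConstraint_column : IsConstraint n Prod.snd :=
  fun _ hf => hf.2.1

theorem isConstraint_block : IsConstraint n fun p => ((p.1 : ℕ) / n, (p.2 : ℕ) / n) :=
  fun _ hf p q hpq => hf.2.2 p q (Prod.ext_iff.1 hpq).1 (Prod.ext_iff.1 hpq).2

section Constraint

variable {α : Type*} [DecidableEq α] {key : Cell n → α}

def earlierPeers (key : Cell n → α) (k c : Fin (n ^ 2)) : Finset (Cell n) :=
  {x | (x.1 : ℕ) < k ∧ key x = key (k, c)}

theorem card_image_earlierPeers {f : Cell n → Fin (n ^ 2)} (hf : IsSudoku n f)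
    (hkey : IsConstraint n key) (k c : Fin (n ^ 2)) :
    #((earlierPeers key k c).image (truncate k f)) = #(earlierPeers key k c) := by
  refine card_image_of_injOn fun x hx y hy hxy => hkey f hf x y ?_ ?_
  · simp only [earlierPeers, coe_filter, mem_univ, true_and, Set.mem_ofPred_eq] at hx hy
    rw [hx.2, hy.2]
  · simp only [earlierPeers, coe_filter, mem_univ, true_and, Set.mem_ofPred_eq] at hx hy
    simpa [truncate, hx.1, hy.1] using hxy

theorem row_mem_transversals {f : Cell n → Fin (n ^ 2)} (hf : IsSudoku n f)
    (hkey : IsConstraint n key) (k : Fin (n ^ 2)) :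
    (fun c => f (k, c)) ∈
      BregmanMinc.transversals fun c => univ \ (earlierPeers key k c).image (truncate k f) := by
  refine BregmanMinc.mem_transversals.2 ⟨fun c c' h => ?_, fun c => ?_⟩
  · exact (Prod.ext_iff.1 (hf.1 (k, c) (k, c') rfl h)).2
  · simp only [mem_sdiff, mem_univ, true_and, mem_image, not_exists, not_and]
    intro x hx hfx
    simp only [earlierPeers, mem_filter, mem_univ, true_and] at hx
    rw [truncate, if_pos hx.1] at hfx
    have := hkey f hf x (k, c) hx.2 hfx
    exact absurd (congrArg (fun p : Cell n => (p.1 : ℕ)) this) (by simpa using hx.1.ne)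

theorem card_extensions_le_card_transversals (hkey : IsConstraint n key) (k : Fin (n ^ 2))
    (g : Cell n → Fin (n ^ 2)) :
    #{h ∈ partialSudokus n (k + 1) | truncate k h = g} ≤
      #(BregmanMinc.transversals fun c => univ \ (earlierPeers key k c).image g) := by
  refine card_le_card_of_injOn (fun h c => h (k, c)) (fun h hh => ?_) ?_
  · obtain ⟨hh, hhg⟩ := mem_filter.1 hh
    obtain ⟨f, hf, rfl⟩ := mem_partialSudokus.1 hh
    rw [← hhg, truncate_truncate (Nat.le_succ (k : ℕ))]
    convert row_mem_transversals hf hkey k using 2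
    simp [truncate]
  · intro h₁ hh₁ h₂ hh₂ hrow
    obtain ⟨hh₁, hg₁⟩ := mem_filter.1 hh₁
    obtain ⟨hh₂, hg₂⟩ := mem_filter.1 hh₂
    obtain ⟨f₁, -, rfl⟩ := mem_partialSudokus.1 hh₁
    obtain ⟨f₂, -, rfl⟩ := mem_partialSudokus.1 hh₂
    rw [truncate_truncate (Nat.le_succ (k : ℕ))] at hg₁ hg₂
    refine truncate_succ_eq_of_row_eq (hg₁.trans hg₂.symm) fun c => ?_
    simpa [truncate] using congrFun hrow c

theorem card_partialSudokus_succ_le (hkey : IsConstraint n key) (k : Fin (n ^ 2)) {e : ℕ}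
    (he : ∀ c, #(earlierPeers key k c) = e) :
    (#(partialSudokus n (k + 1)) : ℝ) ≤
      #(partialSudokus n k) * ((n ^ 2 - e)! : ℝ) ^ (((n ^ 2 : ℕ) : ℝ) / (n ^ 2 - e : ℕ)) := by
  have hmaps : ∀ h ∈ partialSudokus n (k + 1), truncate k h ∈ partialSudokus n k := by
    intro h hh
    obtain ⟨f, hf, rfl⟩ := mem_partialSudokus.1 hh
    exact mem_partialSudokus.2 ⟨f, hf, (truncate_truncate (Nat.le_succ (k : ℕ)) f).symm⟩
  have hfiber : ∀ g ∈ partialSudokus n k, (#{h ∈ partialSudokus n (k + 1) | truncate k h = g} : ℝ)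
      ≤ ((n ^ 2 - e)! : ℝ) ^ (((n ^ 2 : ℕ) : ℝ) / (n ^ 2 - e : ℕ)) := by
    intro g hg
    obtain ⟨f, hf, rfl⟩ := mem_partialSudokus.1 hg
    refine (Nat.cast_le.2 (card_extensions_le_card_transversals hkey k _)).trans
      (BregmanMinc.card_transversals_le_of_card_eq fun c => ?_)
    rw [card_sdiff_of_subset (subset_univ _), card_image_earlierPeers hf hkey, he, card_univ,
      Fintype.card_fin]
  calc (#(partialSudokus n (k + 1)) : ℝ)
      = ∑ g ∈ partialSudokus n k, (#{h ∈ partialSudokus n (k + 1) | truncate k h = g} : ℝ) := by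
        exact_mod_cast card_eq_sum_card_fiberwise hmaps
    _ ≤ _ := by
        rw [← nsmul_eq_mul]
        exact sum_le_card_nsmul _ _ _ hfiber

end Constraint

theorem card_earlierPeers_column (k c : Fin (n ^ 2)) : #(earlierPeers Prod.snd k c) = k := by
  rw [earlierPeers, ← univ_product_univ, filter_product (fun r : Fin (n ^ 2) => (r : ℕ) < k)
    (· = c), card_product, Fin.card_filter_val_lt, filter_eq', if_pos (mem_univ c), card_singleton,
    min_eq_right k.isLt.le, mul_one]

theorem card_earlierPeers_block (k c : Fin (n ^ 2)) :
    #(earlierPeers (fun p : Cell n => ((p.1 : ℕ) / n, (p.2 : ℕ) / n)) k c) = (k : ℕ) % n * n := by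
  have hn : 0 < n := by
    rcases Nat.eq_zero_or_pos n with rfl | hn
    · exact absurd k.isLt (by simp)
    · exact hn
  have hrows : ∀ r : Fin (n ^ 2), (r : ℕ) < k ∧ (r : ℕ) / n = k / n ↔
      (r : ℕ) ∈ Ico (k - k % n) k := fun r => by
    have := Nat.div_add_mod' (k : ℕ) n
    have := Nat.mod_lt (k : ℕ) hn
    rw [Nat.div_eq_iff hn, mem_Ico]
    omega
  have hcols : ∀ c' : Fin (n ^ 2), (c' : ℕ) / n = c / n ↔
      (c' : ℕ) ∈ Ico (c / n * n) (c / n * n + n) := fun c' => by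
    rw [Nat.div_eq_iff hn, mem_Ico]
    omega
  have hc : (c : ℕ) / n * n + n ≤ n ^ 2 := by
    have : (c : ℕ) / n < n := Nat.div_lt_of_lt_mul (by rw [← sq]; exact c.isLt)
    nlinarith
  simp only [earlierPeers, Prod.mk.injEq, ← and_assoc]
  rw [← univ_product_univ, filter_product (fun r : Fin (n ^ 2) => (r : ℕ) < k ∧ (r : ℕ) / n = k / n)
    (fun c' : Fin (n ^ 2) => (c' : ℕ) / n = c / n), card_product]
  simp_rw [hrows, hcols]
  rw [Fin.card_filter_val_mem_Ico k.isLt.le, Fin.card_filter_val_mem_Ico hc,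
    Nat.sub_sub_self (Nat.mod_le _ _), Nat.add_sub_cancel_left]

/-- Row `k` of a solution meets, in each column, the `k` values above it, and in each block the
`(k % n) * n` values of that block above it. -/
def freeValues (n k : ℕ) : ℕ := n ^ 2 - max k (k % n * n)

theorem card_partialSudokus_succ_le_freeValues (k : Fin (n ^ 2)) :
    (#(partialSudokus n (k + 1)) : ℝ) ≤
      #(partialSudokus n k) * ((freeValues n k)! : ℝ) ^ (((n ^ 2 : ℕ) : ℝ) / freeValues n k) := by
  rcases le_total (k : ℕ) (k % n * n) with h | h
  · rw [freeValues, max_eq_right h]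
    exact card_partialSudokus_succ_le isConstraint_block k (card_earlierPeers_block k)
  · rw [freeValues, max_eq_left h]
    exact card_partialSudokus_succ_le isConstraint_column k (card_earlierPeers_column k)

theorem card_partialSudokus_le {k : ℕ} (hk : k ≤ n ^ 2) :
    (#(partialSudokus n k) : ℝ) ≤
      ∏ t ∈ range k, ((freeValues n t)! : ℝ) ^ (((n ^ 2 : ℕ) : ℝ) / freeValues n t) := by
  induction k with
  | zero => simpa using card_partialSudokus_zero_le_one
  | succ k ih =>
    rw [prod_range_succ]
    exact (card_partialSudokus_succ_le_freeValues ⟨k, hk⟩).trans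
      (mul_le_mul_of_nonneg_right (ih (by omega)) (by positivity))

theorem freeValues_of_le {i j : ℕ} (hji : j ≤ i) (hj : j < n) :
    freeValues n (i * n + j) = n ^ 2 - i * n - j := by
  have : j * n ≤ i * n := Nat.mul_le_mul_right n hji
  rw [freeValues, Nat.mul_add_mod_self_right, Nat.mod_eq_of_lt hj, Nat.sub_sub]
  congr 1
  omega

theorem freeValues_of_lt {i j : ℕ} (hij : i < j) (hj : j < n) :
    freeValues n (i * n + j) = n ^ 2 - j * n := by
  have : (i + 1) * n ≤ j * n := Nat.mul_le_mul_right n hij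
  rw [freeValues, Nat.mul_add_mod_self_right, Nat.mod_eq_of_lt hj]
  congr 1
  rw [add_mul, one_mul] at this
  omega

theorem prod_range_sq_freeValues :
    ∏ t ∈ range (n ^ 2), ((freeValues n t)! : ℝ) ^ (((n ^ 2 : ℕ) : ℝ) / freeValues n t) =
      ∏ i ∈ range n,
        (∏ j ∈ range (i + 1),
          ((n ^ 2 - i * n - j).factorial : ℝ) ^
            ((n ^ 2 : ℝ) / ((n : ℝ) ^ 2 - i * n - j))) *
        (∏ j ∈ Ico (i + 1) n,
          ((n ^ 2 - j * n).factorial : ℝ) ^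
            ((n ^ 2 : ℝ) / ((n : ℝ) ^ 2 - j * n))) := by
  rw [show range (n ^ 2) = range (n * n) by rw [sq], prod_range_mul_eq_prod_prod]
  refine prod_congr rfl fun i hi => ?_
  have hi : i < n := mem_range.1 hi
  rw [← prod_range_mul_prod_Ico _ (Nat.succ_le_of_lt hi)]
  have hin : i * n + n ≤ n ^ 2 := by nlinarith
  congr 1
  · refine prod_congr rfl fun j hj => ?_
    have hji : j ≤ i := Nat.lt_succ_iff.1 (mem_range.1 hj)
    rw [freeValues_of_le hji (hji.trans_lt hi), Nat.sub_sub, Nat.cast_sub (by omega)]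
    push_cast
    ring_nf
  · refine prod_congr rfl fun j hj => ?_
    obtain ⟨hij, hj⟩ := mem_Ico.1 hj
    have hjn : j * n ≤ n ^ 2 := by nlinarith
    rw [freeValues_of_lt hij hj, Nat.cast_sub hjn]
    push_cast
    ring_nf

end Sudoku

/-- The indices `i, j` are shifted down by one relative to the informal statement. -/
theorem sudoku_card_le_general (n : ℕ) :
    (Nat.card {f : Fin (n ^ 2) × Fin (n ^ 2) → Fin (n ^ 2) // IsSudoku n f} : ℝ) ≤
      ∏ i ∈ range n,
        (∏ j ∈ range (i + 1),
          ((n ^ 2 - i * n - j).factorial : ℝ) ^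
            ((n ^ 2 : ℝ) / ((n : ℝ) ^ 2 - i * n - j))) *
        (∏ j ∈ Ico (i + 1) n,
          ((n ^ 2 - j * n).factorial : ℝ) ^
            ((n ^ 2 : ℝ) / ((n : ℝ) ^ 2 - j * n))) := by
  rw [← Sudoku.card_partialSudokus_sq, ← Sudoku.prod_range_sq_freeValues]
  exact Sudoku.card_partialSudokus_le le_rfl

/-- Herzberg's upper bound: the number of solutions `S(n)` to an `n × n` Sudoku
satisfies `S(n) ≤ ∏_{i=1}^n (∏_{j=1}^i μ(i,j)) (∏_{j=i+1}^n ν(j))`.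
Here the indices `i, j` are shifted down by one relative to the informal statement. -/
theorem sudoku_card_le (n : ℕ) (hn : 1 ≤ n) :
    (Nat.card {f : Fin (n ^ 2) × Fin (n ^ 2) → Fin (n ^ 2) // IsSudoku n f} : ℝ) ≤
      ∏ i ∈ range n,
        (∏ j ∈ range (i + 1),
          ((n ^ 2 - i * n - j).factorial : ℝ) ^
            ((n ^ 2 : ℝ) / ((n : ℝ) ^ 2 - i * n - j))) *
        (∏ j ∈ Ico (i + 1) n,
          ((n ^ 2 - j * n).factorial : ℝ) ^
            ((n ^ 2 : ℝ) / ((n : ℝ) ^ 2 - j * n))) :=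
  sudoku_card_le_general n
end

section
/- Herzberg's upper bound satisfies ln S_U(n) = 2n⁴ ln n − 2.5 n⁴ + O(n³ ln n) as n → ∞. -/
open Finset

/-- Herzberg's upper bound `S_U(n)` (indices shifted down by one). -/
noncomputable def SU (n : ℕ) : ℝ :=
  ∏ i ∈ range n,
    (∏ j ∈ range (i + 1),
      ((n ^ 2 - i * n - j).factorial : ℝ) ^
        ((n ^ 2 : ℝ) / ((n : ℝ) ^ 2 - i * n - j))) *
    (∏ j ∈ Ico (i + 1) n,
      ((n ^ 2 - j * n).factorial : ℝ) ^
        ((n ^ 2 : ℝ) / ((n : ℝ) ^ 2 - j * n)))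

/-!
`log S_U(n) = ∑ (n² / m) log m!`, the sum running over the `n²` factorial arguments `m`.
Stirling's bounds `0 ≤ log m! - (m log m - m) ≤ log m / 2 + 1` replace this by
`n² ∑ log m - n⁴` at a cost of `n² (log n + 1) ∑ 1 / m`, and `∑ 1 / m ≤ 2n` because only
the last row has arguments below `n`.

In row `i`, column `j` the argument is `n (n - max i j)`, minus `j` when `j ≤ i`. Dropping
the `- j` changes `log m` by at most `(log n - log (n - j)) / (n - i)` (Bernoulli's
inequality `(1 - t / k)ᵏ ≥ 1 - t`), which sums to at most
`H_n (n log n - log n!) ≤ n (1 + log n)`. What remains is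
`n² log n + ∑ₖ (2k + 1) log (n - k) = n² log n + (2n + 1) log n! - 2 ∑ₖ k log k`, and Stirling
together with `∑ₖ k log k = n² log n / 2 - n² / 4 + O(n log n)` gives
`2 n² log n - 3 n² / 2 + O(n log n)`.
-/

open Real
open scoped Nat

theorem mul_log_add_one_sub_log_le {x : ℝ} (hx : 0 < x) : x * (log (x + 1) - log x) ≤ 1 := by
  rw [← log_div (by positivity) hx.ne']
  calc x * log ((x + 1) / x) ≤ x * ((x + 1) / x - 1) := by
        gcongr; exact log_le_sub_one_of_pos (by positivity)
    _ = 1 := by field_simp; ring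

theorem one_le_add_one_mul_log_add_one_sub_log {x : ℝ} (hx : 0 < x) :
    1 ≤ (x + 1) * (log (x + 1) - log x) := by
  rw [← log_div (by positivity) hx.ne']
  calc 1 = (x + 1) * (1 - ((x + 1) / x)⁻¹) := by field_simp; ring
    _ ≤ (x + 1) * log ((x + 1) / x) := by
        gcongr; exact one_sub_inv_le_log_of_pos (by positivity)

theorem self_mul_log_sub_self_le_log_factorial (m : ℕ) : m * log m - m ≤ log m ! := by
  rcases eq_or_ne m 0 with rfl | hm
  · simp
  have := Stirling.le_log_factorial_stirling hm
  have := log_natCast_nonneg m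
  have : 0 ≤ log (2 * π) := log_nonneg (by linarith [pi_gt_three])
  linarith

theorem log_factorial_le (m : ℕ) : log m ! ≤ m * log m - m + log m / 2 + 1 := by
  rcases m with _ | m
  · simp
  have h := Stirling.log_stirlingSeq'_antitone (Nat.zero_le m)
  simp only [Function.comp, Nat.succ_eq_add_one, zero_add, Stirling.stirlingSeq_one,
    Stirling.log_stirlingSeq_formula] at h
  rw [log_div (exp_pos 1).ne' (by positivity), log_exp, log_sqrt zero_le_two,
    log_mul two_ne_zero (by positivity)] at h
  push_cast at h ⊢
  rw [log_div (by positivity) (exp_pos 1).ne', log_exp] at h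
  linarith

theorem le_sum_range_mul_log (n : ℕ) :
    (n : ℝ) ^ 2 / 2 * log n - (n : ℝ) ^ 2 / 4 ≤
      ∑ k ∈ range n, ((k : ℝ) + 1) * log (k + 1) := by
  induction n with
  | zero => simp
  | succ n ih =>
    rw [sum_range_succ]
    push_cast
    rcases Nat.eq_zero_or_pos n with rfl | hn
    · norm_num
    have hn' : (0 : ℝ) < n := by exact_mod_cast hn
    have hstep := mul_log_add_one_sub_log_le hn'
    have hlog : 0 ≤ log ((n : ℝ) + 1) := log_nonneg (by linarith)
    linarith [mul_le_mul_of_nonneg_left hstep (by positivity : (0 : ℝ) ≤ n / 2)]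

theorem sum_range_mul_log_le (n : ℕ) :
    ∑ k ∈ range n, ((k : ℝ) + 1) * log (k + 1) ≤
      (n : ℝ) ^ 2 / 2 * log n - (n : ℝ) ^ 2 / 4 + n * log n + n := by
  induction n with
  | zero => simp
  | succ n ih =>
    rw [sum_range_succ]
    push_cast
    rcases Nat.eq_zero_or_pos n with rfl | hn
    · norm_num
    have hn' : (0 : ℝ) < n := by exact_mod_cast hn
    have hstep := one_le_add_one_mul_log_add_one_sub_log hn'
    have hmono : log (n : ℝ) ≤ log ((n : ℝ) + 1) := log_le_log hn' (by linarith)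
    have hlog : 0 ≤ log (n : ℝ) := log_natCast_nonneg n
    linarith [mul_le_mul_of_nonneg_left hstep (by positivity : (0 : ℝ) ≤ n / 2),
      mul_nonneg (by positivity : (0 : ℝ) ≤ n / 2) (sub_nonneg.2 hmono)]

theorem sum_range_sum_range_max {M : Type*} [AddCommMonoid M] (g : ℕ → M) (n : ℕ) :
    ∑ i ∈ range n, ∑ j ∈ range n, g (max i j) = ∑ k ∈ range n, (2 * k + 1) • g k := by
  induction n with
  | zero => simp
  | succ n ih =>
    have hrow : ∀ i ∈ range n, g (max i n) = g n := fun i hi => by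
      rw [max_eq_right (mem_range.1 hi).le]
    have hcol : ∀ j ∈ range n, g (max n j) = g n := fun j hj => by
      rw [max_eq_left (mem_range.1 hj).le]
    simp only [sum_range_succ, sum_add_distrib, ih, sum_congr rfl hrow, sum_congr rfl hcol,
      sum_const, card_range, max_self]
    simp only [add_smul, two_mul, one_smul]
    abel

theorem sum_range_log_sub (n : ℕ) : ∑ j ∈ range n, log ((n - j : ℕ) : ℝ) = log n ! := by
  rw [← log_prod fun j hj => by simpa [Nat.sub_eq_zero_iff_le] using mem_range.1 hj,
    ← Nat.cast_prod, ← Nat.descFactorial_eq_prod_range, Nat.descFactorial_self]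

theorem sum_range_inv_sub (n : ℕ) : ∑ i ∈ range n, ((n - i : ℕ) : ℝ)⁻¹ = harmonic n := by
  rw [harmonic, ← sum_range_reflect]
  push_cast
  refine sum_congr rfl fun i hi => ?_
  rw [show n - (n - 1 - i) = i + 1 by have := mem_range.1 hi; omega]
  push_cast
  rfl

theorem sum_range_odd_smul_log_sub (n : ℕ) :
    ∑ k ∈ range n, (2 * k + 1) • log ((n - k : ℕ) : ℝ) =
      (2 * n + 1) * log n ! - 2 * ∑ k ∈ range n, ((k : ℝ) + 1) * log (k + 1) := by
  have hreflect : ∑ k ∈ range n, ((k : ℝ) + 1) * log (k + 1) =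
      ∑ k ∈ range n, ((n - k : ℕ) : ℝ) * log ((n - k : ℕ) : ℝ) := by
    rw [← sum_range_reflect]
    refine sum_congr rfl fun k hk => ?_
    rw [show n - k = n - 1 - k + 1 by have := mem_range.1 hk; omega]
    push_cast
    rfl
  rw [hreflect, ← sum_range_log_sub, mul_sum, mul_sum, ← sum_sub_distrib]
  refine sum_congr rfl fun k hk => ?_
  rw [nsmul_eq_mul, Nat.cast_sub (mem_range.1 hk).le]
  push_cast
  ring

theorem log_one_sub_le_mul_log_one_sub_div {t : ℝ} (ht₀ : 0 ≤ t) (ht₁ : t < 1) {k : ℕ}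
    (hk : k ≠ 0) : log (1 - t) ≤ k * log (1 - t / k) := by
  have hk' : (1 : ℝ) ≤ k := by exact_mod_cast Nat.one_le_iff_ne_zero.2 hk
  have hdiv : t / k ≤ t := div_le_self ht₀ hk'
  rw [← log_pow]
  apply log_le_log (by linarith)
  have := one_add_mul_le_pow (a := -(t / k)) (by linarith) k
  rw [mul_neg, mul_div_cancel₀ _ (by positivity)] at this
  simpa [sub_eq_add_neg] using this

theorem one_le_two_mul_log {n : ℕ} (hn : 2 ≤ n) : 1 ≤ 2 * log n := by
  have := log_le_log two_pos (by exact_mod_cast hn : (2 : ℝ) ≤ n)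
  linarith [log_two_gt_d9]

namespace SU

-- The factorial argument at row `i`, column `j` of `SU n`, the two inner products of a row
-- merged into one over `j < n`.
def arg (n i j : ℕ) : ℕ := if j ≤ i then n ^ 2 - i * n - j else n ^ 2 - j * n

variable {n i j : ℕ}

theorem cast_arg (hi : i < n) (hj : j < n) :
    (arg n i j : ℝ) = if j ≤ i then (n : ℝ) ^ 2 - i * n - j else (n : ℝ) ^ 2 - j * n := by
  unfold arg
  split_ifs with hji
  · have : i * n + j ≤ n ^ 2 := by nlinarith
    rw [Nat.sub_sub, Nat.cast_sub this]
    push_cast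
    ring
  · have : j * n ≤ n ^ 2 := by nlinarith
    rw [Nat.cast_sub this]
    push_cast
    ring

theorem one_le_arg (hi : i < n) (hj : j < n) : (1 : ℝ) ≤ arg n i j := by
  have hi' : (i : ℝ) + 1 ≤ n := by exact_mod_cast hi
  have hj' : (j : ℝ) + 1 ≤ n := by exact_mod_cast hj
  rw [cast_arg hi hj]
  split_ifs with hji
  · have : (j : ℝ) ≤ i := by exact_mod_cast hji
    nlinarith
  · nlinarith

theorem le_arg (hi : i + 1 < n) (hj : j < n) : (n : ℝ) ≤ arg n i j := by
  have hi' : (i : ℝ) + 2 ≤ n := by exact_mod_cast hi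
  have hj' : (j : ℝ) + 1 ≤ n := by exact_mod_cast hj
  rw [cast_arg (by omega) hj]
  split_ifs with hji
  · have : (j : ℝ) ≤ i := by exact_mod_cast hji
    nlinarith
  · nlinarith

theorem arg_le_mul_sub_max (hi : i < n) (hj : j < n) :
    (arg n i j : ℝ) ≤ n * (n - max i j : ℕ) := by
  rw [cast_arg hi hj]
  split_ifs with hji
  · rw [max_eq_left hji, Nat.cast_sub hi.le]
    linarith [(Nat.cast_nonneg j : (0 : ℝ) ≤ j)]
  · rw [max_eq_right (by omega), Nat.cast_sub hj.le]
    linarith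

theorem arg_le_sq (hi : i < n) (hj : j < n) : (arg n i j : ℝ) ≤ (n : ℝ) ^ 2 := by
  have hmax : ((n - max i j : ℕ) : ℝ) ≤ n := by exact_mod_cast Nat.sub_le n _
  calc (arg n i j : ℝ) ≤ n * (n - max i j : ℕ) := arg_le_mul_sub_max hi hj
    _ ≤ (n : ℝ) ^ 2 := by rw [sq]; gcongr

theorem log_eq_sum (n : ℕ) :
    log (SU n) =
      ∑ i ∈ range n, ∑ j ∈ range n, (n : ℝ) ^ 2 / arg n i j * log (arg n i j)! := by
  have hSU : SU n = ∏ i ∈ range n, ∏ j ∈ range n,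
      ((arg n i j)! : ℝ) ^ ((n : ℝ) ^ 2 / arg n i j) := by
    refine prod_congr rfl fun i hi => ?_
    have hi := mem_range.1 hi
    rw [← prod_range_mul_prod_Ico _ (Nat.succ_le_of_lt hi)]
    congr 1
    · refine prod_congr rfl fun j hj => ?_
      have hj := Nat.lt_succ_iff.1 (mem_range.1 hj)
      rw [cast_arg hi (by omega), if_pos hj, arg, if_pos hj]
    · refine prod_congr rfl fun j hj => ?_
      have hj := mem_Ico.1 hj
      rw [cast_arg hi hj.2, if_neg (by omega), arg, if_neg (by omega)]
  rw [hSU, log_prod fun i _ => (prod_pos fun j _ => by positivity).ne']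
  refine sum_congr rfl fun i _ => ?_
  rw [log_prod fun j _ => by positivity]
  exact sum_congr rfl fun j _ => log_rpow (by positivity) _

theorem sum_inv_arg_le (n : ℕ) :
    ∑ i ∈ range n, ∑ j ∈ range n, (1 : ℝ) / arg n i j ≤ 2 * n := by
  rcases n with _ | m
  · simp
  have hrows : ∑ i ∈ range m, ∑ j ∈ range (m + 1), (1 : ℝ) / arg (m + 1) i j ≤
      ∑ i ∈ range m, ∑ j ∈ range (m + 1), (1 : ℝ) / (m + 1 : ℕ) := by
    refine sum_le_sum fun i hi => sum_le_sum fun j hj => ?_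
    exact one_div_le_one_div_of_le (by positivity) (le_arg (by simpa using hi) (mem_range.1 hj))
  have hlast :
      ∑ j ∈ range (m + 1), (1 : ℝ) / arg (m + 1) m j ≤ ∑ j ∈ range (m + 1), 1 :=
    sum_le_sum fun j hj =>
      div_le_one_of_le₀ (one_le_arg (by omega) (mem_range.1 hj)) (by positivity)
  simp only [sum_const, card_range, nsmul_eq_mul] at hrows hlast
  rw [sum_range_succ]
  push_cast at hrows hlast ⊢
  rw [mul_one_div_cancel (by positivity), mul_one] at hrows
  linarith

theorem sq_div_arg_mul_log_factorial_sub_mem_Icc (hi : i < n) (hj : j < n) :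
    (n : ℝ) ^ 2 / arg n i j * log (arg n i j)! -
        ((n : ℝ) ^ 2 * log (arg n i j) - (n : ℝ) ^ 2) ∈
      Set.Icc 0 ((n : ℝ) ^ 2 * (log n + 1) * (1 / arg n i j)) := by
  set m : ℕ := arg n i j
  have hm : (1 : ℝ) ≤ m := one_le_arg hi hj
  have hm₀ : (m : ℝ) ≠ 0 := by positivity
  have hlogm : log m ≤ 2 * log n := by
    calc log m ≤ log ((n : ℝ) ^ 2) := log_le_log (by linarith) (arg_le_sq hi hj)
      _ = 2 * log n := by rw [log_pow]; push_cast; ring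
  have hF₁ := self_mul_log_sub_self_le_log_factorial m
  have hF₂ := log_factorial_le m
  have hid : (n : ℝ) ^ 2 / m * log m ! - ((n : ℝ) ^ 2 * log m - n ^ 2) =
      (n : ℝ) ^ 2 * (1 / m) * (log m ! - (m * log m - m)) := by
    field_simp
  rw [hid, mul_right_comm]
  exact ⟨mul_nonneg (by positivity) (by linarith),
    mul_le_mul_of_nonneg_left (by linarith) (by positivity)⟩

theorem abs_log_sub_le (hn : 2 ≤ n) :
    |log (SU n) -
        ((n : ℝ) ^ 2 * ∑ i ∈ range n, ∑ j ∈ range n, log (arg n i j) - (n : ℝ) ^ 4)| ≤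
      6 * (n : ℝ) ^ 3 * log n := by
  have hdecomp :
      log (SU n) - ((n : ℝ) ^ 2 * ∑ i ∈ range n, ∑ j ∈ range n, log (arg n i j) - n ^ 4) =
        ∑ i ∈ range n, ∑ j ∈ range n, ((n : ℝ) ^ 2 / arg n i j * log (arg n i j)! -
          ((n : ℝ) ^ 2 * log (arg n i j) - (n : ℝ) ^ 2)) := by
    simp only [log_eq_sum, sum_sub_distrib, mul_sum, sum_const, card_range, nsmul_eq_mul]
    ring
  have hterm i (hi : i ∈ range n) j (hj : j ∈ range n) :=
    sq_div_arg_mul_log_factorial_sub_mem_Icc (mem_range.1 hi) (mem_range.1 hj)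
  have hlog := one_le_two_mul_log hn
  rw [hdecomp, abs_of_nonneg (sum_nonneg fun i hi => sum_nonneg fun j hj => (hterm i hi j hj).1)]
  calc _ ≤ ∑ i ∈ range n, ∑ j ∈ range n, (n : ℝ) ^ 2 * (log n + 1) * (1 / arg n i j) :=
        sum_le_sum fun i hi => sum_le_sum fun j hj => (hterm i hi j hj).2
    _ = (n : ℝ) ^ 2 * (log n + 1) *
          ∑ i ∈ range n, ∑ j ∈ range n, (1 : ℝ) / arg n i j := by
        simp only [mul_sum]
    _ ≤ (n : ℝ) ^ 2 * (3 * log n) * (2 * n) := by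
        gcongr
        · linarith
        · exact sum_inv_arg_le n
    _ = 6 * (n : ℝ) ^ 3 * log n := by ring

theorem sum_log_arg_le (n : ℕ) :
    ∑ i ∈ range n, ∑ j ∈ range n, log (arg n i j) ≤
      ∑ i ∈ range n, ∑ j ∈ range n, log (n * (n - max i j : ℕ)) := by
  refine sum_le_sum fun i hi => sum_le_sum fun j hj => ?_
  have hi := mem_range.1 hi
  have hj := mem_range.1 hj
  exact log_le_log (by linarith [one_le_arg hi hj]) (arg_le_mul_sub_max hi hj)

theorem log_mul_sub_max_sub_log_arg_le (hi : i < n) (hj : j < n) :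
    log (n * (n - max i j : ℕ)) - log (arg n i j) ≤
      (log n - log (n - j : ℕ)) / (n - i : ℕ) := by
  have hN : (0 : ℝ) < n := by exact_mod_cast (by omega : 0 < n)
  have hK : (0 : ℝ) < (n - i : ℕ) := by exact_mod_cast (by omega : 0 < n - i)
  have hNj : (0 : ℝ) < (n - j : ℕ) := by exact_mod_cast (by omega : 0 < n - j)
  have harg := one_le_arg hi hj
  rw [cast_arg hi hj] at harg ⊢
  split_ifs at harg ⊢ with hji
  · rw [max_eq_left hji, le_div_iff₀ hK]
    have hb := log_one_sub_le_mul_log_one_sub_div (t := j / n) (by positivity)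
      ((div_lt_one hN).2 (by exact_mod_cast hj)) (k := n - i) (by omega)
    have e₁ : 1 - (j : ℝ) / n = ((n - j : ℕ) : ℝ) / n := by
      rw [Nat.cast_sub hj.le]; field_simp
    have e₂ : 1 - (j : ℝ) / n / ((n - i : ℕ) : ℝ) =
        ((n : ℝ) ^ 2 - i * n - j) / (n * ((n - i : ℕ) : ℝ)) := by
      rw [Nat.cast_sub hi.le] at hK ⊢; field_simp
    rw [e₁, e₂, log_div hNj.ne' hN.ne', log_div (by linarith) (by positivity)] at hb
    linarith
  · have hlog : log (n - j : ℕ) ≤ log n := log_le_log hNj (by exact_mod_cast Nat.sub_le n j)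
    rw [max_eq_right (by omega), show (n : ℝ) ^ 2 - j * n = n * (n - j : ℕ) by
      rw [Nat.cast_sub hj.le]; ring, sub_self]
    exact div_nonneg (by linarith) hK.le

theorem sum_log_mul_sub_max_le (n : ℕ) :
    ∑ i ∈ range n, ∑ j ∈ range n, log (n * (n - max i j : ℕ)) ≤
      ∑ i ∈ range n, ∑ j ∈ range n, log (arg n i j) + n * (1 + log n) := by
  have hdeficit : ∑ i ∈ range n, ∑ j ∈ range n, log (n * (n - max i j : ℕ)) -
      ∑ i ∈ range n, ∑ j ∈ range n, log (arg n i j) ≤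
        ∑ i ∈ range n, ∑ j ∈ range n, (log n - log (n - j : ℕ)) / (n - i : ℕ) := by
    simp only [← sum_sub_distrib]
    exact sum_le_sum fun i hi => sum_le_sum fun j hj =>
      log_mul_sub_max_sub_log_arg_le (mem_range.1 hi) (mem_range.1 hj)
  have hsplit : ∑ i ∈ range n, ∑ j ∈ range n, (log n - log (n - j : ℕ)) / (n - i : ℕ) =
      harmonic n * (n * log n - log n !) := by
    simp_rw [div_eq_inv_mul, ← sum_mul_sum, sum_sub_distrib, sum_range_log_sub, sum_const,
      card_range, nsmul_eq_mul, sum_range_inv_sub]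
  have hH₀ : (0 : ℝ) ≤ harmonic n := by rw [← sum_range_inv_sub]; positivity
  have hS : (n : ℝ) * log n - log n ! ≤ n := by
    linarith [self_mul_log_sub_self_le_log_factorial n]
  have hbound : (harmonic n : ℝ) * (n * log n - log n !) ≤ n * (1 + log n) :=
    calc (harmonic n : ℝ) * (n * log n - log n !) ≤ harmonic n * n := by gcongr
      _ ≤ (1 + log n) * n := by gcongr; exact harmonic_le_one_add_log n
      _ = n * (1 + log n) := mul_comm _ _
  linarith

theorem sum_log_mul_sub_max (n : ℕ) :
    ∑ i ∈ range n, ∑ j ∈ range n, log (n * (n - max i j : ℕ)) =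
      n ^ 2 * log n +
        ((2 * n + 1) * log n ! - 2 * ∑ k ∈ range n, ((k : ℝ) + 1) * log (k + 1)) := by
  have hsplit : ∀ i ∈ range n, ∀ j ∈ range n,
      log (n * (n - max i j : ℕ)) = log n + log (n - max i j : ℕ) := fun i hi j hj => by
    have := mem_range.1 hi
    have := mem_range.1 hj
    exact log_mul (by exact_mod_cast (by omega : n ≠ 0))
      (by exact_mod_cast (by omega : n - max i j ≠ 0))
  rw [sum_congr rfl fun i hi => sum_congr rfl (hsplit i hi)]
  simp only [sum_add_distrib, sum_const, card_range, nsmul_eq_mul]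
  rw [sum_range_sum_range_max (fun k => log ((n - k : ℕ) : ℝ)) n, sum_range_odd_smul_log_sub]
  ring

theorem abs_sum_log_arg_sub_le (hn : 2 ≤ n) :
    |∑ i ∈ range n, ∑ j ∈ range n, log (arg n i j) -
        (2 * (n : ℝ) ^ 2 * log n - 3 / 2 * (n : ℝ) ^ 2)| ≤ 10 * n * log n := by
  have hup := sum_log_arg_le n
  have hdown := sum_log_mul_sub_max_le n
  rw [sum_log_mul_sub_max] at hup hdown
  have hF₁ := mul_le_mul_of_nonneg_left (self_mul_log_sub_self_le_log_factorial n)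
    (by positivity : (0 : ℝ) ≤ 2 * n + 1)
  have hF₂ := mul_le_mul_of_nonneg_left (log_factorial_le n)
    (by positivity : (0 : ℝ) ≤ 2 * n + 1)
  have hG₁ := le_sum_range_mul_log n
  have hG₂ := sum_range_mul_log_le n
  have hlog := one_le_two_mul_log hn
  have hlog' := mul_le_mul_of_nonneg_left hlog n.cast_nonneg
  have hlogn : log n ≤ n * log n :=
    le_mul_of_one_le_left (log_natCast_nonneg n) (by exact_mod_cast (by omega : 1 ≤ n))
  rw [abs_le]
  constructor <;> linarith

end SU

/-- `ln S_U(n) = 2 n⁴ ln n − 2.5 n⁴ + O(n³ ln n)` as `n → ∞`. -/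
theorem log_SU_asymptotic :
    ∃ C : ℝ, ∀ n : ℕ, 2 ≤ n →
      |Real.log (SU n) - (2 * (n : ℝ) ^ 4 * Real.log n - 2.5 * (n : ℝ) ^ 4)| ≤
        C * (n : ℝ) ^ 3 * Real.log n := by
  refine ⟨16, fun n hn => ?_⟩
  set A := ∑ i ∈ range n, ∑ j ∈ range n, log (SU.arg n i j)
  have hStirling := SU.abs_log_sub_le hn
  have hmain := SU.abs_sum_log_arg_sub_le hn
  calc |log (SU n) - (2 * (n : ℝ) ^ 4 * log n - 2.5 * (n : ℝ) ^ 4)|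
      = |(log (SU n) - ((n : ℝ) ^ 2 * A - n ^ 4)) +
          (n : ℝ) ^ 2 * (A - (2 * (n : ℝ) ^ 2 * log n - 3 / 2 * (n : ℝ) ^ 2))| := by
        congr 1; ring
    _ ≤ 6 * (n : ℝ) ^ 3 * log n + (n : ℝ) ^ 2 * (10 * n * log n) := by
        grw [abs_add_le, abs_mul, abs_of_nonneg (by positivity : (0 : ℝ) ≤ (n : ℝ) ^ 2),
          hStirling, hmain]
    _ = 16 * (n : ℝ) ^ 3 * log n := by ring
end

section
/- For fixed constants c₁ = O(1) and c₂ = O(1), the upper bound for the partly filled Sudoku satisfies ln S_U(n; c₁, c₂) = 2n⁴ ln n − 2.5 n⁴ + O(n³ ln n) as n → ∞; i.e., the leading asymptotics coincide with those of the unconstrained bound S_U(n). -/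
open Finset

/-- The permanent-based upper bound `S_U(n; c₁, c₂)` for the number of completions
of an `(n; c₁, c₂)` partly filled Sudoku (indices shifted down by one). -/
noncomputable def SUpf (n c₁ c₂ : ℕ) : ℝ :=
  (∏ i ∈ range c₁,
    (∏ j ∈ range (i + 1),
      ((n ^ 2 - i * n - j).factorial : ℝ) ^
        (((n : ℝ) ^ 2 - c₂ * n) / ((n : ℝ) ^ 2 - i * n - j))) *
    (∏ j ∈ Ico (i + 1) n,
      ((n ^ 2 - j * n).factorial : ℝ) ^
        (((n : ℝ) ^ 2 - c₂ * n) / ((n : ℝ) ^ 2 - j * n)))) *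
  (∏ i ∈ Ico c₁ n,
    (∏ j ∈ range (i + 1),
      ((n ^ 2 - i * n - j).factorial : ℝ) ^
        ((n ^ 2 : ℝ) / ((n : ℝ) ^ 2 - i * n - j))) *
    (∏ j ∈ Ico (i + 1) n,
      ((n ^ 2 - j * n).factorial : ℝ) ^
        ((n ^ 2 : ℝ) / ((n : ℝ) ^ 2 - j * n))))

/-!
Taking logarithms, `log S_U(n; c₁, c₂) = n² ∑ᵢ Rᵢ - c₂ n ∑_{i < c₁} Rᵢ`, where `Rᵢ` is the sum of
`log m! / m` over the `n` arguments `m = μ, ν` of row `i`. Each `log m! / m` lies in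
`[0, 2 log n]`, so the filled cells cost only `O(c₁ c₂ n² log n)`.

For the free part, `log m! / m = log m - 1 + O((1 + log m) / m)` by telescoping against
`x log x - x`, and replacing each `μ(i, j)` of row `i` by `ν(i) = (n - i) n` costs `O(n / μ)`.
As `(i, j)` ranges over `[0, n)²`, `n² - i n - j` enumerates `[1, n²]`, so all these errors add
up to `O(n log n)` through the harmonic bound. What remains is
`∑ₖ (2k + 1) (log ((n - k) n) - 1) = n² (log n - 1) + (2n + 1) log n! - 2 ∑ₖ (k + 1) log (k + 1)`,
and the asymptotics of `log n!` and of `∑ k log k` give `2 n² log n - 5/2 n² + O(n log n)`.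
-/

open Real
open scoped Nat

lemma log_sub_log_le_sub_div {a b : ℝ} (ha : 0 < a) (hb : 0 < b) :
    log b - log a ≤ (b - a) / a := by
  have := log_le_sub_one_of_pos (div_pos hb ha)
  rw [log_div hb.ne' ha.ne'] at this
  rwa [sub_div, div_self ha.ne']

lemma natCast_mul_log_add_one_sub_log_le_one (k : ℕ) : (k : ℝ) * (log (k + 1) - log k) ≤ 1 := by
  rcases k.eq_zero_or_pos with rfl | hk
  · simp
  have hk : (0 : ℝ) < k := by exact_mod_cast hk
  calc (k : ℝ) * (log (k + 1) - log k)
      ≤ k * ((k + 1 - k) / k) := by gcongr; exact log_sub_log_le_sub_div hk (by positivity)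
    _ = 1 := by field_simp; ring

lemma div_add_one_le_natCast_mul_log_add_one_sub_log (k : ℕ) :
    (k : ℝ) / (k + 1) ≤ k * (log (k + 1) - log k) := by
  rcases k.eq_zero_or_pos with rfl | hk
  · simp
  have h := log_sub_log_le_sub_div (by positivity : (0 : ℝ) < k + 1) (by positivity : (0 : ℝ) < k)
  calc (k : ℝ) / (k + 1) = k * -(((k : ℝ) - (k + 1)) / (k + 1)) := by ring
    _ ≤ k * (log (k + 1) - log k) := by gcongr; linarith

lemma abs_sum_range_sub_telescope_le (a F e : ℕ → ℝ) (n : ℕ)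
    (h : ∀ k < n, |a k - (F (k + 1) - F k)| ≤ e k) :
    |∑ k ∈ range n, a k - (F n - F 0)| ≤ ∑ k ∈ range n, e k := by
  rw [← sum_range_sub, ← sum_sub_distrib]
  exact (abs_sum_le_sum_abs _ _).trans
    (sum_le_sum fun k hk => h k (mem_range.mp hk))

lemma log_factorial_eq_sum (n : ℕ) : log n ! = ∑ k ∈ range n, log (k + 1) := by
  rw [← prod_range_add_one_eq_factorial, Nat.cast_prod,
    log_prod fun k _ => by positivity]
  push_cast
  rfl

lemma abs_log_factorial_sub_le (n : ℕ) : |log n ! - n * (log n - 1)| ≤ 1 + log n := by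
  have htel := abs_sum_range_sub_telescope_le (fun k => log (k + 1))
    (fun k => k * (log k - 1)) (fun k => 1 / (k + 1)) n fun k _ => by
      have hl := div_add_one_le_natCast_mul_log_add_one_sub_log k
      have hu := natCast_mul_log_add_one_sub_log_le_one k
      have hstep : log ((k : ℝ) + 1) - ((k + 1) * (log (k + 1) - 1) - k * (log k - 1)) =
          1 - k * (log (k + 1) - log k) := by ring
      have hk : 1 - (k : ℝ) / (k + 1) = 1 / (k + 1) := by field_simp; ring
      push_cast
      rw [hstep, abs_le]
      constructor
      · linarith [one_div_nonneg.mpr (by positivity : (0 : ℝ) ≤ k + 1)]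
      · linarith
  have hharm : ∑ k ∈ range n, (1 : ℝ) / (k + 1) ≤ 1 + log n := by
    simpa [harmonic, one_div] using harmonic_le_one_add_log n
  simpa [log_factorial_eq_sum] using htel.trans hharm

lemma abs_sum_mul_log_sub_le (n : ℕ) :
    |∑ k ∈ range n, ((k : ℝ) + 1) * log (k + 1) - (n ^ 2 * log n / 2 - n ^ 2 / 4)| ≤
      n * (1 + log n) := by
  have htel := abs_sum_range_sub_telescope_le (fun k => ((k : ℝ) + 1) * log (k + 1))
    (fun k => (k : ℝ) ^ 2 * log k / 2 - k ^ 2 / 4) (fun _ => 1 + log n) n fun k hk => by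
      have hl := div_add_one_le_natCast_mul_log_add_one_sub_log k
      have hu := natCast_mul_log_add_one_sub_log_le_one k
      have hk0 : (0 : ℝ) ≤ k := k.cast_nonneg
      have hlog : 0 ≤ log ((k : ℝ) + 1) := log_nonneg (by linarith)
      have hlogn : log ((k : ℝ) + 1) ≤ log n :=
        log_le_log (by positivity) (by exact_mod_cast hk)
      have hdiv : (k : ℝ) * (k / (k + 1)) = k - 1 + 1 / (k + 1) := by field_simp; ring
      have hinv : 0 ≤ 1 / ((k : ℝ) + 1) := by positivity
      push_cast
      rw [abs_le]
      constructor <;> nlinarith [mul_le_mul_of_nonneg_left hl hk0,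
        mul_le_mul_of_nonneg_left hu hk0]
  simpa [mul_add] using htel

noncomputable def logFactorialMean (m : ℕ) : ℝ := log m ! / m

-- Row `i` of the paper is row `i + 1` here, so `μ(i + 1, j + 1) = n² - i n - j` and
-- `ν(j + 1) = n² - j n`; the row's factor in `S_U` is `exp ((n² - c n) * rowSum n i)`.
noncomputable def rowSum (n i : ℕ) : ℝ :=
  ∑ j ∈ range (i + 1), logFactorialMean (n ^ 2 - i * n - j) +
    ∑ j ∈ Ico (i + 1) n, logFactorialMean (n ^ 2 - j * n)

lemma mul_add_lt_sq {n i j : ℕ} (hi : i < n) (hj : j < n) : i * n + j < n ^ 2 := by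
  have : (i + 1) * n ≤ n * n := Nat.mul_le_mul_right n hi
  nlinarith

lemma cast_sq_sub_mul_sub {n i j : ℕ} (hi : i < n) (hj : j < n) :
    ((n ^ 2 - i * n - j : ℕ) : ℝ) = (n : ℝ) ^ 2 - i * n - j := by
  have := mul_add_lt_sq hi hj
  rw [Nat.sub_sub, Nat.cast_sub this.le]
  push_cast
  ring

lemma cast_sq_sub_mul {n j : ℕ} (hj : j < n) :
    ((n ^ 2 - j * n : ℕ) : ℝ) = (n : ℝ) ^ 2 - j * n := by
  simpa using cast_sq_sub_mul_sub (j := 0) hj (by omega)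

lemma factorial_rpow_div_eq_exp {m : ℕ} {D : ℝ} (hD : (m : ℝ) = D) (x : ℝ) :
    (m ! : ℝ) ^ (x / D) = exp (x * logFactorialMean m) := by
  rw [← hD, rpow_def_of_pos (by positivity), logFactorialMean]
  ring_nf

lemma rowProd_eq_exp {n i : ℕ} (hi : i < n) (x : ℝ) :
    (∏ j ∈ range (i + 1), ((n ^ 2 - i * n - j)! : ℝ) ^ (x / ((n : ℝ) ^ 2 - i * n - j))) *
      (∏ j ∈ Ico (i + 1) n, ((n ^ 2 - j * n)! : ℝ) ^ (x / ((n : ℝ) ^ 2 - j * n))) =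
    exp (x * rowSum n i) := by
  rw [prod_congr rfl fun j hj => factorial_rpow_div_eq_exp
      (cast_sq_sub_mul_sub hi ((mem_range.mp hj).trans_le hi)) x,
    prod_congr rfl fun j hj => factorial_rpow_div_eq_exp
      (cast_sq_sub_mul (mem_Ico.mp hj).2) x,
    ← exp_sum, ← exp_sum, ← exp_add, rowSum, mul_add, mul_sum, mul_sum]

lemma log_SUpf_eq {n c₁ : ℕ} (c₂ : ℕ) (hc₁ : c₁ ≤ n) :
    log (SUpf n c₁ c₂) =
      n ^ 2 * ∑ i ∈ range n, rowSum n i - c₂ * n * ∑ i ∈ range c₁, rowSum n i := by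
  rw [SUpf, prod_congr rfl fun i hi => rowProd_eq_exp ((mem_range.mp hi).trans_le hc₁) _,
    prod_congr rfl fun i hi => rowProd_eq_exp (mem_Ico.mp hi).2 _,
    ← exp_sum, ← exp_sum, ← exp_add, log_exp, ← sum_range_add_sum_Ico _ hc₁, ← mul_sum,
    ← mul_sum]
  ring

lemma logFactorialMean_nonneg (m : ℕ) : 0 ≤ logFactorialMean m :=
  div_nonneg (log_nonneg (by exact_mod_cast m.factorial_pos)) m.cast_nonneg

lemma logFactorialMean_le_log (m : ℕ) : logFactorialMean m ≤ log m := by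
  rcases m.eq_zero_or_pos with rfl | hm
  · simp [logFactorialMean]
  have hm : (0 : ℝ) < m := by exact_mod_cast hm
  rw [logFactorialMean, div_le_iff₀ hm, mul_comm, ← log_pow]
  exact log_le_log (by positivity) (by exact_mod_cast m.factorial_le_pow)

lemma abs_logFactorialMean_sub_le {m : ℕ} (hm : m ≠ 0) :
    |logFactorialMean m - (log m - 1)| ≤ (1 + log m) / m := by
  have hm : (0 : ℝ) < m := by positivity
  rw [logFactorialMean, show log m ! / m - (log m - 1) = (log m ! - m * (log m - 1)) / m by
    field_simp, abs_div, abs_of_pos hm]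
  gcongr
  exact abs_log_factorial_sub_le m

lemma abs_logFactorialMean_sub_log_le {m N : ℕ} (hm : m ≠ 0) (hmN : m ≤ N) :
    |logFactorialMean m - (log N - 1)| ≤ (1 + log m + (N - m)) / m := by
  have hm0 : (0 : ℝ) < m := by positivity
  have hmN : (m : ℝ) ≤ N := by exact_mod_cast hmN
  have hlog := log_sub_log_le_sub_div hm0 (hm0.trans_le hmN)
  have hlog' := log_le_log hm0 hmN
  calc |logFactorialMean m - (log N - 1)|
      ≤ |logFactorialMean m - (log m - 1)| + |(log m - 1) - (log N - 1)| := abs_sub_le _ _ _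
    _ = |logFactorialMean m - (log m - 1)| + (log N - log m) := by
        rw [abs_of_nonpos (a := (log m - 1) - (log N - 1)) (by linarith)]; ring
    _ ≤ (1 + log m) / m + (N - m) / m := add_le_add (abs_logFactorialMean_sub_le hm) hlog
    _ = _ := by ring

lemma log_natCast_le_two_mul_log {m n : ℕ} (h : m ≤ n ^ 2) : log m ≤ 2 * log n := by
  rcases m.eq_zero_or_pos with rfl | hm
  · simpa using log_natCast_nonneg n
  rw [← Nat.cast_ofNat, ← log_pow, ← Nat.cast_pow]
  exact log_le_log (by exact_mod_cast hm) (by exact_mod_cast h)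

lemma rowSum_nonneg (n i : ℕ) : 0 ≤ rowSum n i :=
  add_nonneg (sum_nonneg fun _ _ => logFactorialMean_nonneg _)
    (sum_nonneg fun _ _ => logFactorialMean_nonneg _)

lemma rowSum_le {n i : ℕ} (hi : i < n) : rowSum n i ≤ n * (2 * log n) := by
  have hcell : ∀ m ≤ n ^ 2, logFactorialMean m ≤ 2 * log n := fun m hm =>
    (logFactorialMean_le_log m).trans (log_natCast_le_two_mul_log hm)
  calc rowSum n i ≤ ∑ j ∈ range (i + 1), 2 * log n + ∑ j ∈ Ico (i + 1) n, 2 * log n :=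
        add_le_add (sum_le_sum fun j _ => hcell _ (by omega))
          (sum_le_sum fun j _ => hcell _ (by omega))
    _ = n * (2 * log n) := by
        rw [sum_const, sum_const, card_range, Nat.card_Ico, nsmul_eq_mul, nsmul_eq_mul,
          ← add_mul, Nat.cast_sub hi, Nat.cast_add_one]
        ring

lemma sum_range_sum_range_mul_add {M : Type*} [AddCommMonoid M] (g : ℕ → M) (A n : ℕ) :
    ∑ a ∈ range A, ∑ b ∈ range n, g (a * n + b) = ∑ m ∈ range (A * n), g m := by
  induction A with
  | zero => simp
  | succ A ih => rw [sum_range_succ, ih, add_mul, one_mul, sum_range_add]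

lemma sq_sub_mul_reflect {n a : ℕ} (ha : a < n) : n ^ 2 - (n - 1 - a) * n = (a + 1) * n := by
  rw [sq, ← Nat.sub_mul, show n - (n - 1 - a) = a + 1 by omega]

lemma sum_inv_sq_sub_mul_sub_le (n : ℕ) :
    ∑ i ∈ range n, ∑ j ∈ range (i + 1), (1 : ℝ) / (n ^ 2 - i * n - j : ℕ) ≤ 1 + 2 * log n :=
  calc ∑ i ∈ range n, ∑ j ∈ range (i + 1), (1 : ℝ) / (n ^ 2 - i * n - j : ℕ)
      ≤ ∑ i ∈ range n, ∑ j ∈ range n, (1 : ℝ) / (n ^ 2 - i * n - j : ℕ) :=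
        sum_le_sum fun i hi => sum_le_sum_of_subset_of_nonneg
          (range_subset_range.mpr (mem_range.mp hi)) fun _ _ _ => by positivity
    _ = ∑ m ∈ range (n * n), (1 : ℝ) / (m + 1 : ℕ) := by
        rw [← sum_range_sum_range_mul_add, ← sum_range_reflect]
        refine sum_congr rfl fun a ha => ?_
        rw [← sum_range_reflect]
        refine sum_congr rfl fun b hb => ?_
        have hb := mem_range.mp hb
        rw [sq_sub_mul_reflect (mem_range.mp ha), add_one_mul,
          show a * n + n - (n - 1 - b) = a * n + b + 1 by omega]
    _ ≤ 1 + log (n * n : ℕ) := by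
        simpa [harmonic, one_div] using harmonic_le_one_add_log (n * n)
    _ = 1 + 2 * log n := by
        rw [Nat.cast_mul, ← sq, log_pow]
        norm_num

lemma abs_logFactorialMean_sq_sub_mul_sub_le {n i j : ℕ} (hi : i < n) (hj : j ≤ i) :
    |logFactorialMean (n ^ 2 - i * n - j) - (log (n ^ 2 - i * n : ℕ) - 1)| ≤
      (1 + 2 * log n + n) / (n ^ 2 - i * n - j : ℕ) := by
  have hlt := mul_add_lt_sq hi (hj.trans_lt hi)
  refine (abs_logFactorialMean_sub_log_le (by omega) (by omega)).trans ?_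
  gcongr ?_ / _
  have hdiff : ((n ^ 2 - i * n : ℕ) : ℝ) - (n ^ 2 - i * n - j : ℕ) = j := by
    rw [cast_sq_sub_mul hi, cast_sq_sub_mul_sub hi (hj.trans_lt hi)]
    ring
  have hjn : (j : ℝ) ≤ n := by exact_mod_cast (hj.trans hi.le)
  linarith [log_natCast_le_two_mul_log (show n ^ 2 - i * n - j ≤ n ^ 2 by omega)]

lemma abs_logFactorialMean_sq_sub_mul_le {n j : ℕ} (hj : j < n) :
    |logFactorialMean (n ^ 2 - j * n) - (log (n ^ 2 - j * n : ℕ) - 1)| ≤ (1 + 2 * log n) / n := by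
  have hlt := mul_add_lt_sq (j := 0) hj (Nat.zero_lt_of_lt hj)
  have hn : (n : ℝ) ≤ (n ^ 2 - j * n : ℕ) := by
    rw [cast_sq_sub_mul hj]
    have : (j : ℝ) + 1 ≤ n := by exact_mod_cast hj
    nlinarith
  refine (abs_logFactorialMean_sub_le (m := n ^ 2 - j * n) (by omega)).trans ?_
  have := log_natCast_nonneg n
  have : (0 : ℝ) < n := by exact_mod_cast Nat.zero_lt_of_lt hj
  gcongr
  exact log_natCast_le_two_mul_log (Nat.sub_le _ _)

lemma abs_rowSum_sub_le {n i : ℕ} (hi : i < n) :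
    |rowSum n i - ((i + 1) * (log (n ^ 2 - i * n : ℕ) - 1) +
        ∑ j ∈ Ico (i + 1) n, (log (n ^ 2 - j * n : ℕ) - 1))| ≤
      (1 + 2 * log n + n) * ∑ j ∈ range (i + 1), (1 : ℝ) / (n ^ 2 - i * n - j : ℕ) +
        (1 + 2 * log n) := by
  have hn : (0 : ℝ) < n := by exact_mod_cast Nat.zero_lt_of_lt hi
  have hμ : |∑ j ∈ range (i + 1), logFactorialMean (n ^ 2 - i * n - j) -
      (i + 1) * (log (n ^ 2 - i * n : ℕ) - 1)| ≤
      (1 + 2 * log n + n) * ∑ j ∈ range (i + 1), (1 : ℝ) / (n ^ 2 - i * n - j : ℕ) := by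
    rw [show ((i : ℝ) + 1) * (log (n ^ 2 - i * n : ℕ) - 1) =
        ∑ j ∈ range (i + 1), (log (n ^ 2 - i * n : ℕ) - 1) by simp [mul_sub], ← sum_sub_distrib,
      mul_sum]
    refine (abs_sum_le_sum_abs _ _).trans (sum_le_sum fun j hj => ?_)
    rw [← div_eq_mul_one_div]
    exact abs_logFactorialMean_sq_sub_mul_sub_le hi (Nat.lt_succ_iff.mp (mem_range.mp hj))
  have hν : |∑ j ∈ Ico (i + 1) n, logFactorialMean (n ^ 2 - j * n) -
      ∑ j ∈ Ico (i + 1) n, (log (n ^ 2 - j * n : ℕ) - 1)| ≤ 1 + 2 * log n := by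
    rw [← sum_sub_distrib]
    calc _ ≤ ∑ j ∈ Ico (i + 1) n, (1 + 2 * log n) / n :=
          (abs_sum_le_sum_abs _ _).trans (sum_le_sum fun j hj =>
            abs_logFactorialMean_sq_sub_mul_le (mem_Ico.mp hj).2)
      _ ≤ ∑ j ∈ range n, (1 + 2 * log n) / n :=
          sum_le_sum_of_subset_of_nonneg (fun j hj => mem_range.mpr (mem_Ico.mp hj).2)
            fun _ _ _ => by have := log_natCast_nonneg n; positivity
      _ = 1 + 2 * log n := by rw [sum_const, card_range, nsmul_eq_mul]; field_simp
  rw [rowSum, add_sub_add_comm]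
  exact (abs_add_le _ _).trans (add_le_add hμ hν)

lemma sum_range_mul_add_sum_Ico {R : Type*} [CommSemiring R] (f : ℕ → R) (n : ℕ) :
    ∑ i ∈ range n, ((i + 1) * f i + ∑ j ∈ Ico (i + 1) n, f j) =
      ∑ k ∈ range n, (2 * k + 1) * f k := by
  rw [sum_add_distrib, range_eq_Ico, sum_Ico_Ico_comm', ← sum_add_distrib]
  refine sum_congr rfl fun k _ => ?_
  simp only [sum_const, Nat.card_Ico, Nat.sub_zero, nsmul_eq_mul]
  ring

lemma abs_sum_rowSum_sub_sum_odd_mul_le (n : ℕ) :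
    |∑ i ∈ range n, rowSum n i - ∑ k ∈ range n, (2 * k + 1) * (log (n ^ 2 - k * n : ℕ) - 1)| ≤
      (1 + 2 * log n + n) * (1 + 2 * log n) + n * (1 + 2 * log n) := by
  rw [← sum_range_mul_add_sum_Ico, ← sum_sub_distrib]
  have := log_natCast_nonneg n
  calc _ ≤ ∑ i ∈ range n, ((1 + 2 * log n + n) *
        ∑ j ∈ range (i + 1), (1 : ℝ) / (n ^ 2 - i * n - j : ℕ) + (1 + 2 * log n)) :=
        (abs_sum_le_sum_abs _ _).trans (sum_le_sum fun i hi =>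
          abs_rowSum_sub_le (mem_range.mp hi))
    _ = (1 + 2 * log n + n) * ∑ i ∈ range n,
        ∑ j ∈ range (i + 1), (1 : ℝ) / (n ^ 2 - i * n - j : ℕ) + n * (1 + 2 * log n) := by
        rw [sum_add_distrib, ← mul_sum, sum_const, card_range, nsmul_eq_mul]
    _ ≤ _ := by gcongr; exact sum_inv_sq_sub_mul_sub_le n

lemma sum_range_two_mul_add_one (n : ℕ) : ∑ k ∈ range n, (2 * (k : ℝ) + 1) = n ^ 2 := by
  induction n with
  | zero => simp
  | succ n ih => rw [sum_range_succ, ih]; push_cast; ring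

lemma sum_odd_mul_log_sq_sub_mul_eq (n : ℕ) :
    ∑ k ∈ range n, (2 * k + 1) * (log (n ^ 2 - k * n : ℕ) - 1) =
      n ^ 2 * (log n - 1) + (2 * n + 1) * log n ! -
        2 * ∑ k ∈ range n, ((k : ℝ) + 1) * log (k + 1) := by
  have hreflect : ∀ k ∈ range n, (2 * ((n - 1 - k : ℕ) : ℝ) + 1) = 2 * n + 1 - 2 * (k + 1) := by
    intro k hk
    have hk := mem_range.mp hk
    rw [Nat.cast_sub (by omega), Nat.cast_sub (by omega)]
    ring
  have hodd : ∑ k ∈ range n, (2 * n + 1 - 2 * ((k : ℝ) + 1)) = n ^ 2 := by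
    rw [← sum_range_two_mul_add_one, ← sum_range_reflect (fun k => 2 * (k : ℝ) + 1)]
    exact (sum_congr rfl hreflect).symm
  rw [← sum_range_reflect, sum_congr rfl fun k hk => by rw [hreflect k hk], ← hodd,
    log_factorial_eq_sum, sum_mul, mul_sum, mul_sum, ← sum_add_distrib, ← sum_sub_distrib]
  refine sum_congr rfl fun k hk => ?_
  have hn : (n : ℝ) ≠ 0 := Nat.cast_ne_zero.mpr (Nat.ne_zero_of_lt (mem_range.mp hk))
  rw [sq_sub_mul_reflect (mem_range.mp hk), Nat.cast_mul, log_mul (by positivity) hn]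
  push_cast
  ring

lemma abs_sum_odd_mul_log_sq_sub_mul_sub_le (n : ℕ) :
    |∑ k ∈ range n, (2 * k + 1) * (log (n ^ 2 - k * n : ℕ) - 1) -
        (2 * n ^ 2 * log n - 5 / 2 * n ^ 2)| ≤ (5 * n + 1) * (1 + log n) := by
  rw [sum_odd_mul_log_sq_sub_mul_eq]
  have hF := abs_le.mp (abs_log_factorial_sub_le n)
  have hK := abs_le.mp (abs_sum_mul_log_sub_le n)
  have hL := log_natCast_nonneg n
  have hn : (0 : ℝ) ≤ n := n.cast_nonneg
  rw [abs_le]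
  constructor <;> nlinarith [mul_le_mul_of_nonneg_left hF.1 (by positivity : (0 : ℝ) ≤ 2 * n + 1),
    mul_le_mul_of_nonneg_left hF.2 (by positivity : (0 : ℝ) ≤ 2 * n + 1)]

lemma abs_sum_rowSum_sub_le {n : ℕ} (hn : 2 ≤ n) :
    |∑ i ∈ range n, rowSum n i - (2 * n ^ 2 * log n - 5 / 2 * n ^ 2)| ≤ 34 * n * log n := by
  have hnR : (2 : ℝ) ≤ n := by exact_mod_cast hn
  have hL : 1 ≤ 2 * log n := by
    have := log_le_log (by norm_num) hnR
    linarith [log_two_gt_d9]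
  have hLn : log n ≤ n - 1 := log_le_sub_one_of_pos (by positivity)
  have hrow := abs_sum_rowSum_sub_sum_odd_mul_le n
  have hodd := abs_sum_odd_mul_log_sq_sub_mul_sub_le n
  calc _ ≤ (1 + 2 * log n + n) * (1 + 2 * log n) + n * (1 + 2 * log n) +
        (5 * n + 1) * (1 + log n) := by
        linarith [abs_sub_le (∑ i ∈ range n, rowSum n i)
          (∑ k ∈ range n, (2 * k + 1) * (log (n ^ 2 - k * n : ℕ) - 1))
          (2 * n ^ 2 * log n - 5 / 2 * n ^ 2)]
    _ ≤ 34 * n * log n := by nlinarith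

/-- For fixed constants `c₁, c₂ = O(1)`, the bound for the partly filled Sudoku has
the same leading asymptotics as the unconstrained bound:
`ln S_U(n; c₁, c₂) = 2 n⁴ ln n − 2.5 n⁴ + O(n³ ln n)`. -/
theorem log_SUpf_asymptotic_const (c₁ c₂ : ℕ) :
    ∃ C : ℝ, ∀ n : ℕ, 2 ≤ n → c₁ ≤ n → c₂ ≤ n →
      |Real.log (SUpf n c₁ c₂) -
          (2 * (n : ℝ) ^ 4 * Real.log n - 2.5 * (n : ℝ) ^ 4)| ≤
        C * (n : ℝ) ^ 3 * Real.log n := by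
  refine ⟨2 * c₁ * c₂ + 34, fun n hn hc₁ _ => ?_⟩
  have hnR : (1 : ℝ) ≤ n := by exact_mod_cast (by omega : 1 ≤ n)
  have hL := log_natCast_nonneg n
  have hmain := abs_sum_rowSum_sub_le hn
  have hfilled : ∑ i ∈ range c₁, rowSum n i ≤ c₁ * (n * (2 * log n)) := by
    simpa using sum_le_sum fun i (hi : i ∈ range c₁) => rowSum_le ((mem_range.mp hi).trans_le hc₁)
  have hfilled₀ := sum_nonneg fun i (_ : i ∈ range c₁) => rowSum_nonneg n i
  rw [log_SUpf_eq c₂ hc₁]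
  calc _ = |(n : ℝ) ^ 2 * (∑ i ∈ range n, rowSum n i - (2 * n ^ 2 * log n - 5 / 2 * n ^ 2)) -
        c₂ * n * ∑ i ∈ range c₁, rowSum n i| := by ring_nf
    _ ≤ n ^ 2 * (34 * n * log n) + c₂ * n * (c₁ * (n * (2 * log n))) := by
        refine (abs_sub _ _).trans (add_le_add ?_ ?_)
        · rw [abs_mul, abs_of_nonneg (by positivity)]; gcongr
        · rw [abs_of_nonneg (by positivity)]; gcongr
    _ ≤ (2 * c₁ * c₂ + 34) * n ^ 3 * log n := by
        have : (0 : ℝ) ≤ c₁ * c₂ * n ^ 2 * log n * (n - 1) := by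
          have : (0 : ℝ) ≤ n - 1 := by linarith
          positivity
        nlinarith
end
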